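/- arXiv:1008.4180 — 7 statements merged into one kernel-verified Lean document; each statement's English description precedes it below -/
import Mathlib

section
/- There exists an absolute constant C > 0 with the following property. For all integers N ≥ 2 and M ≥ 2, every nonempty subset X of {1, 2, …, 10^M}, and every real Δ ≥ 1, the number of primes p ≤ N for which the inequality | #{x mod p : x ∈ X} − |X| | ≤ C·|X| / (1 + π(N)·log M / (M·|X|·Δ)) FAILS is at most C·π(N)/Δ. -/
/-!
A prime `p` at which `X` occupies far fewer than `|X|` residues forces many pairs `x ≠ y` in `X`
with `x ≡ y (mod p)`. A fixed difference `0 < |x - y| ≤ 10^M` is divisible by at most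
`2 M log 10 / log M` primes `p > √M`, so double counting the colliding pairs bounds the number of
exceptional primes `p > √M` by `O(|X|² M / (log M · threshold))`, while there are at most
`√M ≤ 2 M / log M` primes `p ≤ √M`. With threshold `10 |X| / (1 + t)`, `t = π(N) log M / (M |X| Δ)`,
both contributions are `O(π(N) / Δ)` once `t > 9`; for `t ≤ 9` the threshold exceeds `|X|`, so no
prime is exceptional.
-/

open Finset Real

section Collisions

variable {α β : Type*} [DecidableEq β]

def collisionPairs (f : α → β) (X : Finset α) : Finset (α × α) :=
  X.offDiag.filter fun q => f q.1 = f q.2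

-- Fibrewise over `X.image f`: a fibre of size `n ≥ 1` has `n (n - 1) ≥ n - 1` collision pairs.
theorem card_le_card_image_add_card_collisionPairs (f : α → β) (X : Finset α) :
    X.card ≤ (X.image f).card + (collisionPairs f X).card := by
  have hfib : (collisionPairs f X).card
      = ∑ r ∈ X.image f, ((X.filter fun x => f x = r).offDiag).card := by
    rw [card_eq_sum_card_fiberwise (f := fun q => f q.1) (t := X.image f)]
    · refine sum_congr rfl fun r _ => congrArg card ?_
      ext q
      simp only [collisionPairs, mem_filter, mem_offDiag]
      grind
    · intro q hq
      simp only [collisionPairs, coe_filter, Set.mem_ofPred_eq, mem_offDiag] at hq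
      exact mem_image_of_mem f hq.1.1
  rw [card_eq_sum_card_image f X, hfib, card_eq_sum_ones (X.image f), ← sum_add_distrib]
  refine sum_le_sum fun r hr => ?_
  obtain ⟨x, hx, rfl⟩ := mem_image.mp hr
  have hpos : 0 < (X.filter fun y => f y = f x).card := card_pos.mpr ⟨x, mem_filter.mpr ⟨hx, rfl⟩⟩
  rw [offDiag_card]
  generalize (X.filter fun y => f y = f x).card = n at hpos ⊢
  obtain ⟨m, rfl⟩ := Nat.exists_eq_add_of_lt hpos
  simp only [zero_add, Nat.add_mul, Nat.mul_add]
  omega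

theorem abs_card_image_sub_card_le_card_collisionPairs (f : α → β) (X : Finset α) :
    |((X.image f).card : ℝ) - X.card| ≤ (collisionPairs f X).card := by
  have himage : ((X.image f).card : ℝ) ≤ X.card := by exact_mod_cast card_image_le
  have hcoll : (X.card : ℝ) ≤ (X.image f).card + (collisionPairs f X).card := by
    exact_mod_cast card_le_card_image_add_card_collisionPairs f X
  rw [abs_sub_comm, abs_of_nonneg (sub_nonneg.mpr himage)]
  linarith

end Collisions

theorem pow_card_le_sq_of_forall_prime_dvd {M d : ℕ} (hd : d ≠ 0) {S : Finset ℕ}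
    (hS : ∀ p ∈ S, p.Prime ∧ M ≤ p * p ∧ p ∣ d) : M ^ S.card ≤ d ^ 2 := by
  have hprod : ∏ p ∈ S, p ≤ d := Nat.le_of_dvd (Nat.pos_of_ne_zero hd)
    (prod_primes_dvd d (fun p hp => (hS p hp).1.prime) fun p hp => (hS p hp).2.2)
  calc M ^ S.card = ∏ _p ∈ S, M := (prod_const M).symm
    _ ≤ ∏ p ∈ S, p * p := prod_le_prod' fun p hp => (hS p hp).2.1
    _ = (∏ p ∈ S, p) ^ 2 := by rw [prod_mul_distrib, sq]
    _ ≤ d ^ 2 := Nat.pow_le_pow_left hprod 2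

theorem card_mul_log_le_of_forall_prime_dvd {M d : ℕ} (hd : d ≠ 0) {S : Finset ℕ}
    (hS : ∀ p ∈ S, p.Prime ∧ M ≤ p * p ∧ p ∣ d) : (S.card : ℝ) * log M ≤ 2 * log d := by
  rcases M.eq_zero_or_pos with rfl | hM
  · simpa using log_natCast_nonneg d
  have hpow : ((M ^ S.card : ℕ) : ℝ) ≤ ((d ^ 2 : ℕ) : ℝ) := by
    exact_mod_cast pow_card_le_sq_of_forall_prime_dvd hd hS
  have := log_le_log (by positivity) hpow
  push_cast at this
  rwa [log_pow, log_pow] at this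

theorem sum_card_collisionPairs_mod_mul_log_le {X P : Finset ℕ} {B M : ℕ}
    (hX : ∀ x ∈ X, x ≤ B) (hP : ∀ p ∈ P, p.Prime ∧ M ≤ p * p) :
    (∑ p ∈ P, ((collisionPairs (· % p) X).card : ℝ)) * log M
      ≤ X.card ^ 2 * (2 * log B) := by
  have hswap : ∑ p ∈ P, ((collisionPairs (· % p) X).card : ℝ)
      = ∑ q ∈ X.offDiag, ((P.filter fun p => q.1 % p = q.2 % p).card : ℝ) := by
    simp only [collisionPairs, card_filter]
    push_cast
    exact sum_comm
  have hpair : ∀ q ∈ X.offDiag,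
      ((P.filter fun p => q.1 % p = q.2 % p).card : ℝ) * log M ≤ 2 * log B := by
    intro q hq
    obtain ⟨hq1, hq2, hne⟩ := mem_offDiag.mp hq
    set d := ((q.2 : ℤ) - q.1).natAbs
    have hd : d ≠ 0 := by omega
    have hdB : d ≤ B := by have := hX _ hq1; have := hX _ hq2; omega
    calc _ ≤ 2 * log d := card_mul_log_le_of_forall_prime_dvd hd fun p hp => by
          obtain ⟨hpP, hmod⟩ := mem_filter.mp hp
          exact ⟨(hP p hpP).1, (hP p hpP).2, Int.natCast_dvd.mp (Nat.modEq_iff_dvd.mp hmod)⟩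
      _ ≤ 2 * log B := by gcongr
  have hoff : (X.offDiag.card : ℝ) ≤ X.card ^ 2 := by
    exact_mod_cast (offDiag_card X).trans_le (Nat.sub_le _ _) |>.trans_eq (sq _).symm
  rw [hswap, sum_mul]
  calc _ ≤ X.offDiag.card • (2 * log B) := sum_le_card_nsmul _ _ _ hpair
    _ ≤ _ := by
      rw [nsmul_eq_mul]
      gcongr

theorem sqrt_mul_log_le {x : ℝ} (hx : 0 ≤ x) : √x * log x ≤ 2 * x := by
  rcases hx.eq_or_lt with rfl | hx
  · simp
  have hlog : log x ≤ 2 * √x := by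
    have := log_le_sub_one_of_pos (sqrt_pos.mpr hx)
    rw [log_sqrt hx.le] at this
    linarith
  calc √x * log x ≤ √x * (2 * √x) := by gcongr
    _ = 2 * x := by rw [mul_left_comm, mul_self_sqrt hx.le]

theorem card_mul_log_le_of_forall_mul_self_le {S : Finset ℕ} {M : ℕ}
    (hS : ∀ p ∈ S, 0 < p ∧ p * p ≤ M) : (S.card : ℝ) * log M ≤ 2 * M := by
  have hsub : S ⊆ Icc 1 M.sqrt := fun p hp =>
    mem_Icc.mpr ⟨(hS p hp).1, Nat.le_sqrt.mpr (hS p hp).2⟩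
  have hcard : (S.card : ℝ) ≤ √M := by
    refine le_trans ?_ Real.nat_sqrt_le_real_sqrt
    exact_mod_cast (card_le_card hsub).trans_eq (Nat.card_Icc 1 M.sqrt)
  calc (S.card : ℝ) * log M ≤ √M * log M := by gcongr
    _ ≤ 2 * M := sqrt_mul_log_le M.cast_nonneg

-- Primes with `p * p ≤ M` are few; a larger prime contributes more than `s` collisions, while
-- each pair of elements of `X` collides modulo few such primes.
theorem card_mul_log_le_of_lt_abs_card_image_mod_sub_card {X P : Finset ℕ} {B M : ℕ} {s : ℝ}
    (hX : ∀ x ∈ X, x ≤ B) (hs : 0 < s)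
    (hP : ∀ p ∈ P, p.Prime ∧ s < |((X.image (· % p)).card : ℝ) - X.card|) :
    (P.card : ℝ) * log M ≤ 2 * M + X.card ^ 2 * (2 * log B) / s := by
  set small := P.filter fun p => p * p ≤ M
  set large := P.filter fun p => ¬ p * p ≤ M
  have hsplit : (P.card : ℝ) = small.card + large.card := by
    exact_mod_cast (card_filter_add_card_filter_not (s := P) (p := fun p => p * p ≤ M)).symm
  have hsmall : (small.card : ℝ) * log M ≤ 2 * M :=
    card_mul_log_le_of_forall_mul_self_le fun p hp =>
      ⟨(hP p (mem_filter.mp hp).1).1.pos, (mem_filter.mp hp).2⟩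
  have hlarge : (large.card : ℝ) * s ≤ ∑ p ∈ large, ((collisionPairs (· % p) X).card : ℝ) := by
    rw [← nsmul_eq_mul]
    refine card_nsmul_le_sum _ _ _ fun p hp => ?_
    exact ((hP p (mem_filter.mp hp).1).2.trans_le
      (abs_card_image_sub_card_le_card_collisionPairs _ X)).le
  have hcoll := sum_card_collisionPairs_mod_mul_log_le (M := M) hX fun p hp =>
    ⟨(hP p (mem_filter.mp hp).1).1, (not_le.mp (mem_filter.mp hp).2).le⟩
  have hlarge' : (large.card : ℝ) * log M ≤ X.card ^ 2 * (2 * log B) / s := by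
    rw [le_div_iff₀ hs, mul_right_comm]
    exact (mul_le_mul_of_nonneg_right hlarge (log_natCast_nonneg M)).trans hcoll
  rw [hsplit, add_mul]
  exact add_le_add hsmall hlarge'

def exceptionalPrimes (X : Finset ℕ) (N : ℕ) (s : ℝ) : Set ℕ :=
  {p | p ≤ N ∧ p.Prime ∧ ¬ |((X.image (· % p)).card : ℝ) - X.card| ≤ s}

theorem exceptionalPrimes_eq_empty {X : Finset ℕ} {N : ℕ} {s : ℝ} (hs : (X.card : ℝ) ≤ s) :
    exceptionalPrimes X N s = ∅ := by
  refine Set.eq_empty_of_forall_notMem fun p ⟨_, _, hp⟩ => hp ?_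
  have himage : ((X.image (· % p)).card : ℝ) ≤ X.card := by exact_mod_cast card_image_le
  have himage0 : (0 : ℝ) ≤ (X.image (· % p)).card := Nat.cast_nonneg _
  exact (abs_sub_le_iff.mpr ⟨by linarith, by linarith⟩).trans hs

theorem ncard_exceptionalPrimes_mul_log_le {X : Finset ℕ} {B M N : ℕ} {s : ℝ}
    (hX : ∀ x ∈ X, x ≤ B) (hs : 0 < s) :
    ((exceptionalPrimes X N s).ncard : ℝ) * log M ≤ 2 * M + X.card ^ 2 * (2 * log B) / s := by
  have hfin : (exceptionalPrimes X N s).Finite := (Set.finite_Iic N).subset fun p hp => hp.1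
  rw [Set.ncard_eq_toFinset_card _ hfin]
  refine card_mul_log_le_of_lt_abs_card_image_mod_sub_card hX hs fun p hp => ?_
  obtain ⟨-, hprime, hlt⟩ := hfin.mem_toFinset.mp hp
  exact ⟨hprime, not_le.mp hlt⟩

/-- **Theorem 2 (value set of a sparse set modulo most primes).**
There is an absolute constant `C > 0` such that for all integers `N ≥ 2`, `M ≥ 2`,
every nonempty `X ⊆ {1, …, 10^M}` and every real `Δ ≥ 1`, the number of primes
`p ≤ N` for which `| #{x mod p : x ∈ X} − |X| | ≤ C·|X| / (1 + π(N)·log M / (M·|X|·Δ))`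
fails is at most `C·π(N)/Δ`. -/
theorem stmt_1 :
    ∃ C : ℝ, 0 < C ∧
      ∀ N M : ℕ, 2 ≤ N → 2 ≤ M →
        ∀ X : Finset ℕ, X ⊆ Finset.Icc 1 (10 ^ M) → X.Nonempty →
          ∀ Δ : ℝ, 1 ≤ Δ →
            ({p : ℕ | p ≤ N ∧ p.Prime ∧
                ¬ (|((X.image (fun x => x % p)).card : ℝ) - (X.card : ℝ)| ≤
                    C * (X.card : ℝ) /
                      (1 + (N.primeCounting : ℝ) * Real.log M /
                        ((M : ℝ) * (X.card : ℝ) * Δ)))}.ncard : ℝ)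
              ≤ C * (N.primeCounting : ℝ) / Δ := by
  refine ⟨10, by norm_num, fun N M _ hM X hX hXne Δ hΔ => ?_⟩
  have hK : (1 : ℝ) ≤ X.card := by exact_mod_cast hXne.card_pos
  have hL : 0 < log M := log_pos (by exact_mod_cast hM)
  set t : ℝ := N.primeCounting * log M / (M * X.card * Δ) with ht
  change ((exceptionalPrimes X N (10 * X.card / (1 + t))).ncard : ℝ) ≤ _
  rcases le_or_gt t 9 with ht9 | ht9
  · rw [exceptionalPrimes_eq_empty, Set.ncard_empty, Nat.cast_zero]
    · positivity
    · rw [le_div_iff₀ (by positivity)]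
      nlinarith
  have key := ncard_exceptionalPrimes_mul_log_le (N := N) (M := M) (s := 10 * X.card / (1 + t))
    (fun x hx => (mem_Icc.mp (hX hx)).2) (by positivity)
  have hu : M * X.card * t = N.primeCounting * log M / Δ := by
    rw [ht]; field_simp
  have hrhs : (X.card : ℝ) ^ 2 * (2 * log (10 ^ M : ℕ)) / (10 * X.card / (1 + t))
      = log 10 * (M * X.card + M * X.card * t) / 5 := by
    push_cast; rw [log_pow]; field_simp; ring
  have hMK : (M : ℝ) ≤ M * X.card := le_mul_of_one_le_right M.cast_nonneg hK
  have hMKt : 9 * (M * X.card : ℝ) < M * X.card * t := by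
    rw [mul_comm 9]; exact mul_lt_mul_of_pos_left ht9 (by positivity)
  have hlog10 : log 10 * (M * X.card + M * X.card * t) ≤ 9 * (M * X.card + M * X.card * t) :=
    mul_le_mul_of_nonneg_right
      (by linarith [log_le_sub_one_of_pos (show (0 : ℝ) < 10 by norm_num)]) (by positivity)
  rw [hrhs, hu] at key
  rw [hu] at hMKt hlog10
  refine le_of_mul_le_mul_right (key.trans ?_) hL
  rw [show 10 * (N.primeCounting : ℝ) / Δ * log M = 10 * (N.primeCounting * log M / Δ) by ring]
  linarith
end

section
/- There exists an absolute constant C > 0 with the following property. For all integers N ≥ 2 and M ≥ 2, every nonempty subset X of {1, 2, …, 10^M}, and every real Δ ≥ 1, define for each prime p the quantity J_p = #{(x, y) ∈ X × X : x ≡ y (mod p)}. Then the number of primes p ≤ N for which J_p > |X| + C·|X|²·M·Δ / (π(N)·log M) is at most C·π(N)/Δ; moreover J_p ≥ |X| holds for every prime p. -/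
/-!
Split `J_p = |X| + E_p`, where `E_p` counts the off-diagonal pairs with `p ∣ x - y`. Summed over
primes, each pair `x ≠ y` contributes at most `ω(|x - y|) ≤ 20 M / log M`, because `|x - y| ≤ 10^M`
has at most `√M` prime factors below `√M` and at most `2 M log 10 / log M` above it. Hence
`∑_{p ≤ N} E_p ≤ 20 |X|² M / log M`, and Markov's inequality bounds the number of primes with
`E_p > 5 |X|² M Δ / (π(N) log M)` by `4 π(N) / Δ`.
-/

open Finset

namespace Finset

variable {α : Type*} [DecidableEq α]

theorem card_filter_product_eq_card_add_card_filter_offDiag (s : Finset α) (r : α → α → Prop)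
    [DecidableRel r] (hr : ∀ a, r a a) :
    #((s ×ˢ s).filter fun q => r q.1 q.2) = #s + #(s.offDiag.filter fun q => r q.1 q.2) := by
  rw [← diag_union_offDiag, filter_union,
    card_union_of_disjoint (disjoint_filter_filter (disjoint_diag_offDiag s)),
    filter_true_of_mem fun q hq => (mem_diag.1 hq).2 ▸ hr q.1, diag_card]

theorem card_filter_lt_nsmul_le_sum {ι β : Type*} [AddCommMonoid β] [PartialOrder β]
    [IsOrderedAddMonoid β] [DecidableLT β] (s : Finset ι) (f : ι → β) (hf : ∀ i ∈ s, 0 ≤ f i)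
    (t : β) :
    #(s.filter fun i => t < f i) • t ≤ ∑ i ∈ s, f i :=
  calc #(s.filter fun i => t < f i) • t ≤ ∑ i ∈ s.filter (fun i => t < f i), f i :=
        card_nsmul_le_sum _ _ _ fun _ hi => (mem_filter.1 hi).2.le
    _ ≤ ∑ i ∈ s, f i :=
        sum_le_sum_of_subset_of_nonneg (filter_subset _ _) fun i hi _ => hf i hi

end Finset

namespace Nat

theorem pow_card_primeFactors_sub_le {d : ℕ} (hd : d ≠ 0) (k : ℕ) :
    (k + 1) ^ (#d.primeFactors - k) ≤ d := by
  have hsmall : #(d.primeFactors.filter (¬ k < ·)) ≤ k := by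
    have : d.primeFactors.filter (¬ k < ·) ⊆ Ioc 0 k := fun p hp => by
      rw [mem_filter] at hp
      exact mem_Ioc.2 ⟨(prime_of_mem_primeFactors hp.1).pos, not_lt.1 hp.2⟩
    simpa using card_le_card this
  have hcard : #d.primeFactors - k ≤ #(d.primeFactors.filter (k < ·)) := by
    have := card_filter_add_card_filter_not (s := d.primeFactors) (k < ·)
    omega
  calc (k + 1) ^ (#d.primeFactors - k) ≤ (k + 1) ^ #(d.primeFactors.filter (k < ·)) :=
        Nat.pow_le_pow_right k.succ_pos hcard
    _ ≤ ∏ p ∈ d.primeFactors.filter (k < ·), p :=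
        pow_card_le_prod _ _ _ fun p hp => (mem_filter.1 hp).2
    _ ≤ d := Nat.le_of_dvd (Nat.pos_of_ne_zero hd) <|
        (prod_dvd_prod_of_subset _ _ _ (filter_subset _ _)).trans (prod_primeFactors_dvd d)

theorem card_filter_modEq_le_card_primeFactors {P : Finset ℕ} (hP : ∀ p ∈ P, p.Prime)
    {x y : ℕ} (hxy : x ≠ y) :
    #(P.filter fun p => x ≡ y [MOD p]) ≤ #((y : ℤ) - x).natAbs.primeFactors := by
  refine card_le_card fun p hp => ?_
  rw [mem_filter] at hp
  exact mem_primeFactors.2 ⟨hP p hp.1, Int.natCast_dvd.1 ((modEq_iff_dvd).1 hp.2), by omega⟩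

theorem card_primeFactors_le_of_le_ten_pow {d M : ℕ} (hd : d ≠ 0) (hdM : d ≤ 10 ^ M)
    (hM : 2 ≤ M) : (#d.primeFactors : ℝ) ≤ 20 * M / Real.log M := by
  set k := M.sqrt
  set L := Real.log M
  have hL : 0 < L := Real.log_pos (by exact_mod_cast hM)
  have hLsqrt : L ≤ 2 * √M := by
    have := Real.log_le_rpow_div (M.cast_nonneg (α := ℝ)) one_half_pos
    rw [← Real.sqrt_eq_rpow] at this
    linarith
  have hLk : L ≤ 2 * Real.log (k + 1) := by
    have : (M : ℝ) ≤ (k + 1) ^ 2 := by exact_mod_cast M.lt_succ_sqrt'.le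
    calc L ≤ Real.log ((k + 1) ^ 2) := Real.log_le_log (by positivity) this
      _ = 2 * Real.log (k + 1) := by rw [Real.log_pow]; norm_num
  have hlarge : ((#d.primeFactors - k : ℕ) : ℝ) * Real.log (k + 1) ≤ M * 9 := by
    have hpow : ((k + 1 : ℕ) : ℝ) ^ (#d.primeFactors - k) ≤ (10 : ℝ) ^ M := by
      exact_mod_cast (pow_card_primeFactors_sub_le hd k).trans hdM
    have hlog10 : Real.log 10 ≤ 9 := by
      linarith [Real.log_le_sub_one_of_pos (show (0 : ℝ) < 10 by norm_num)]
    have := Real.log_le_log (by positivity) hpow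
    rw [Real.log_pow, Real.log_pow] at this
    push_cast at this
    exact this.trans (by gcongr)
  have hsmall : (k : ℝ) * L ≤ 2 * M :=
    calc (k : ℝ) * L ≤ √M * (2 * √M) := by gcongr; exact Real.nat_sqrt_le_real_sqrt
      _ = 2 * M := by rw [mul_left_comm, Real.mul_self_sqrt M.cast_nonneg]
  rw [le_div_iff₀ hL]
  calc (#d.primeFactors : ℝ) * L ≤ (k + (#d.primeFactors - k : ℕ)) * L := by
        gcongr; exact_mod_cast (by omega : #d.primeFactors ≤ k + (#d.primeFactors - k))
    _ = k * L + (#d.primeFactors - k : ℕ) * L := by ring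
    _ ≤ 2 * M + (#d.primeFactors - k : ℕ) * (2 * Real.log (k + 1)) := by gcongr
    _ ≤ 2 * M + 2 * (M * 9) := by linarith
    _ = 20 * M := by ring

end Nat

theorem sum_card_filter_offDiag_modEq_le {X : Finset ℕ} {M : ℕ} (hX : ∀ x ∈ X, x ≤ 10 ^ M)
    (hM : 2 ≤ M) {P : Finset ℕ} (hP : ∀ p ∈ P, p.Prime) :
    (∑ p ∈ P, #(X.offDiag.filter fun q => q.1 ≡ q.2 [MOD p]) : ℝ) ≤
      #X ^ 2 * (20 * M / Real.log M) := by
  have hswap : ∑ p ∈ P, #(X.offDiag.filter fun q => q.1 ≡ q.2 [MOD p]) =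
      ∑ q ∈ X.offDiag, #(P.filter fun p => q.1 ≡ q.2 [MOD p]) := by
    simp only [card_filter]
    exact sum_comm
  have hpair : ∀ q ∈ X.offDiag,
      (#(P.filter fun p => q.1 ≡ q.2 [MOD p]) : ℝ) ≤ 20 * M / Real.log M := by
    intro q hq
    obtain ⟨hx, hy, hxy⟩ := mem_offDiag.1 hq
    have hx' := hX _ hx
    have hy' := hX _ hy
    exact (Nat.cast_le.2 (Nat.card_filter_modEq_le_card_primeFactors hP hxy)).trans
      (Nat.card_primeFactors_le_of_le_ten_pow (by omega) (by omega) hM)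
  calc (∑ p ∈ P, #(X.offDiag.filter fun q => q.1 ≡ q.2 [MOD p]) : ℝ)
      = ∑ q ∈ X.offDiag, (#(P.filter fun p => q.1 ≡ q.2 [MOD p]) : ℝ) := by
        exact_mod_cast hswap
    _ ≤ #X.offDiag • (20 * M / Real.log M) := sum_le_card_nsmul _ _ _ hpair
    _ ≤ #X ^ 2 * (20 * M / Real.log M) := by
      rw [nsmul_eq_mul]
      gcongr
      rw [offDiag_card, sq]
      exact_mod_cast Nat.sub_le _ _

theorem card_filter_lt_card_filter_offDiag_modEq_le {X : Finset ℕ} {M : ℕ}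
    (hX : ∀ x ∈ X, x ≤ 10 ^ M) (hM : 2 ≤ M) (hXne : X.Nonempty) {P : Finset ℕ}
    (hP : ∀ p ∈ P, p.Prime) {c n Δ : ℝ} (hc : 0 < c) (hn : 0 < n) (hΔ : 0 < Δ) :
    (#(P.filter fun p => c * #X ^ 2 * M * Δ / (n * Real.log M) <
        #(X.offDiag.filter fun q => q.1 ≡ q.2 [MOD p])) : ℝ) ≤ 20 * n / (c * Δ) := by
  set K : ℝ := #X ^ 2 * M / Real.log M
  have hK : 0 < K := by
    have := hXne.card_pos
    have := Real.log_pos (by exact_mod_cast hM : (1 : ℝ) < M)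
    positivity
  have hmarkov := (card_filter_lt_nsmul_le_sum P _ (fun _ _ => Nat.cast_nonneg _)
    (c * #X ^ 2 * M * Δ / (n * Real.log M))).trans (sum_card_filter_offDiag_modEq_le hX hM hP)
  rw [nsmul_eq_mul] at hmarkov
  rw [le_div_iff₀ (by positivity)]
  refine le_of_mul_le_mul_right ?_ (div_pos hK hn)
  calc _ = _ * (c * #X ^ 2 * M * Δ / (n * Real.log M)) := by simp only [K]; field_simp
    _ ≤ _ := hmarkov
    _ = 20 * n * (K / n) := by simp only [K]; field_simp

/-- **Lemma (asymptotics for `J_p`).**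
There is an absolute constant `C > 0` such that for all integers `N ≥ 2`, `M ≥ 2`,
every nonempty `X ⊆ {1, …, 10^M}` and every real `Δ ≥ 1`: writing
`J_p = #{(x,y) ∈ X × X : x ≡ y (mod p)}`, the number of primes `p ≤ N` with
`J_p > |X| + C·|X|²·M·Δ / (π(N)·log M)` is at most `C·π(N)/Δ`; moreover
`J_p ≥ |X|` for every prime `p`. -/
theorem stmt_3 :
    ∃ C : ℝ, 0 < C ∧
      ∀ N M : ℕ, 2 ≤ N → 2 ≤ M →
        ∀ X : Finset ℕ, X ⊆ Finset.Icc 1 (10 ^ M) → X.Nonempty →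
          ∀ Δ : ℝ, 1 ≤ Δ →
            (({p : ℕ | p ≤ N ∧ p.Prime ∧
                ((X.card : ℝ) + C * (X.card : ℝ) ^ 2 * (M : ℝ) * Δ /
                    ((N.primeCounting : ℝ) * Real.log M) <
                  (((X ×ˢ X).filter (fun q => q.1 ≡ q.2 [MOD p])).card : ℝ))}.ncard : ℝ)
              ≤ C * (N.primeCounting : ℝ) / Δ) ∧
            (∀ p : ℕ, p.Prime →
              X.card ≤ ((X ×ˢ X).filter (fun q => q.1 ≡ q.2 [MOD p])).card) := by
  refine ⟨5, by norm_num, fun N M hN hM X hX hXne Δ hΔ => ?_⟩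
  have hJ (p : ℕ) : #((X ×ˢ X).filter fun q => q.1 ≡ q.2 [MOD p]) =
      #X + #(X.offDiag.filter fun q => q.1 ≡ q.2 [MOD p]) :=
    card_filter_product_eq_card_add_card_filter_offDiag X _ fun _ => Nat.ModEq.refl _
  refine ⟨?_, fun p _ => (hJ p).symm ▸ Nat.le_add_right _ _⟩
  have hπ : (0 : ℝ) < N.primeCounting :=
    Nat.cast_pos.2 (Nat.pos_of_ne_zero (Nat.primeCounting_eq_zero_iff.not.2 (by omega)))
  have hΔ0 : 0 < Δ := by linarith
  have hset : {p : ℕ | p ≤ N ∧ p.Prime ∧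
      (#X + 5 * #X ^ 2 * M * Δ / (N.primeCounting * Real.log M) : ℝ) <
        #((X ×ˢ X).filter fun q => q.1 ≡ q.2 [MOD p])} = ↑((Nat.primesLE N).filter fun p =>
        5 * #X ^ 2 * M * Δ / (N.primeCounting * Real.log M) <
          (#(X.offDiag.filter fun q => q.1 ≡ q.2 [MOD p]) : ℝ)) := by
    ext p
    simp [Nat.mem_primesLE, hJ, and_assoc]
  rw [hset, Set.ncard_coe_finset]
  calc _ ≤ 20 * N.primeCounting / (5 * Δ) :=
        card_filter_lt_card_filter_offDiag_modEq_le (fun x hx => (mem_Icc.1 (hX hx)).2) hM hXne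
          (fun p hp => (Nat.mem_primesLE.1 hp).2) (by norm_num) hπ hΔ0
    _ = 4 * N.primeCounting / Δ := by field_simp; ring
    _ ≤ 5 * N.primeCounting / Δ := by gcongr; norm_num
end

section
/- Let p be a prime, let X, Y, Z be subsets of {0, 1, …, p−1}, and let λ be an integer. Let T denote the number of quadruples (x, y, z₁, z₂) with x ∈ X, y ∈ Y, z₁, z₂ ∈ Z and x·y + z₁ + z₂ ≡ λ (mod p). Then |T − |X|·|Y|·|Z|²/p| ≤ √(p·|X|·|Y|)·|Z|. In particular, if |X|·|Y|·|Z|² > p³ then T > 0, i.e., the congruence x·y + z₁ + z₂ ≡ λ (mod p) has a solution with x ∈ X, y ∈ Y, z₁, z₂ ∈ Z. -/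
/-!
Detect the congruence with a primitive additive character `ψ` of the field:
`p·T = ∑ₜ A(t) B(t)² ψ(-tλ)` with `A(t) = ∑_{x,y} ψ(txy)` and `B(t) = ∑_z ψ(tz)`.
The term `t = 0` is the main term `|X||Y||Z|²`. For `t ≠ 0`, Cauchy–Schwarz in `x` followed by
Parseval in `y` gives `|A(t)| ≤ √(p|X||Y|)`, and Parseval once more gives `∑ₜ |B(t)|² = p|Z|`.
-/

open Finset

namespace AddChar

variable {F : Type*} [Field F] [Fintype F] [DecidableEq F] {ψ : AddChar F ℂ}

lemma sum_norm_sq_sum_mul (hψ : ψ.IsPrimitive) (Y : Finset F) :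
    ∑ u : F, ‖∑ y ∈ Y, ψ (u * y)‖ ^ 2 = Fintype.card F * #Y := by
  suffices ∑ u : F, ((‖∑ y ∈ Y, ψ (u * y)‖ : ℂ)) ^ 2 = Fintype.card F * #Y by exact_mod_cast this
  calc ∑ u : F, ((‖∑ y ∈ Y, ψ (u * y)‖ : ℂ)) ^ 2
      = ∑ y ∈ Y, ∑ y' ∈ Y, ∑ u : F, ψ (u * (y - y')) := by
        simp_rw [← Complex.mul_conj', map_sum, ← map_neg_eq_conj, sum_mul_sum, ← map_add_eq_mul,
          mul_sub, sub_eq_add_neg]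
        rw [sum_comm]
        exact sum_congr rfl fun _ _ => sum_comm
    _ = ∑ y ∈ Y, ∑ y' ∈ Y, if y = y' then (Fintype.card F : ℂ) else 0 := by
        simp_rw [sum_mulShift _ hψ, sub_eq_zero, Nat.cast_ite, Nat.cast_zero]
    _ = Fintype.card F * #Y := by simp [mul_comm]

lemma norm_sum_sum_mul_mul_le (hψ : ψ.IsPrimitive) {t : F} (ht : t ≠ 0) (X Y : Finset F) :
    ‖∑ x ∈ X, ∑ y ∈ Y, ψ (t * x * y)‖ ≤ √(Fintype.card F * #X * #Y) := by
  rw [Real.le_sqrt (norm_nonneg _) (by positivity)]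
  calc ‖∑ x ∈ X, ∑ y ∈ Y, ψ (t * x * y)‖ ^ 2
      ≤ (∑ x ∈ X, ‖∑ y ∈ Y, ψ (t * x * y)‖) ^ 2 := by gcongr; exact norm_sum_le _ _
    _ ≤ #X * ∑ x ∈ X, ‖∑ y ∈ Y, ψ (t * x * y)‖ ^ 2 := sq_sum_le_card_mul_sum_sq
    _ ≤ #X * ∑ u : F, ‖∑ y ∈ Y, ψ (u * y)‖ ^ 2 := by
        gcongr
        calc _ ≤ ∑ x : F, ‖∑ y ∈ Y, ψ (t * x * y)‖ ^ 2 :=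
              sum_le_univ_sum_of_nonneg fun _ => by positivity
          _ = _ := Equiv.sum_comp (Equiv.mulLeft₀ t ht) fun u => ‖∑ y ∈ Y, ψ (u * y)‖ ^ 2
    _ = Fintype.card F * #X * #Y := by rw [sum_norm_sq_sum_mul hψ]; ring

lemma card_mul_card_filter_eq (hψ : ψ.IsPrimitive) (X Y Z : Finset F) (c : F) :
    (Fintype.card F : ℂ) * #{q ∈ X ×ˢ Y ×ˢ Z ×ˢ Z | q.1 * q.2.1 + q.2.2.1 + q.2.2.2 = c}
      = ∑ t : F, (∑ x ∈ X, ∑ y ∈ Y, ψ (t * x * y)) * (∑ z ∈ Z, ψ (t * z)) ^ 2 * ψ (-(t * c)) := by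
  calc (Fintype.card F : ℂ) * #{q ∈ X ×ˢ Y ×ˢ Z ×ˢ Z | q.1 * q.2.1 + q.2.2.1 + q.2.2.2 = c}
      = ∑ q ∈ X ×ˢ Y ×ˢ Z ×ˢ Z, ∑ t : F, ψ (t * (q.1 * q.2.1 + q.2.2.1 + q.2.2.2 - c)) := by
        rw [card_filter, Nat.cast_sum, mul_sum]
        refine sum_congr rfl fun q _ => ?_
        simp only [sum_mulShift _ hψ, sub_eq_zero]
        split_ifs <;> simp
    _ = ∑ t : F, ∑ q ∈ X ×ˢ Y ×ˢ Z ×ˢ Z, ψ (t * (q.1 * q.2.1 + q.2.2.1 + q.2.2.2 - c)) := sum_comm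
    _ = _ := by
        refine sum_congr rfl fun t _ => ?_
        simp only [sum_product, sq, sum_mul]
        simp only [mul_sum, sum_mul, ← map_add_eq_mul]
        refine sum_congr rfl fun x _ => sum_congr rfl fun y _ => sum_congr rfl fun z₁ _ =>
          sum_congr rfl fun z₂ _ => congrArg ψ (by ring)

lemma norm_card_mul_card_filter_sub_le (hψ : ψ.IsPrimitive) (X Y Z : Finset F) (c : F) :
    ‖(Fintype.card F : ℂ) * #{q ∈ X ×ˢ Y ×ˢ Z ×ˢ Z | q.1 * q.2.1 + q.2.2.1 + q.2.2.2 = c}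
        - #X * #Y * #Z ^ 2‖ ≤ √(Fintype.card F * #X * #Y) * (Fintype.card F * #Z) := by
  set A : F → ℂ := fun t => ∑ x ∈ X, ∑ y ∈ Y, ψ (t * x * y)
  set B : F → ℂ := fun t => ∑ z ∈ Z, ψ (t * z)
  have hsplit : (Fintype.card F : ℂ) * #{q ∈ X ×ˢ Y ×ˢ Z ×ˢ Z | q.1 * q.2.1 + q.2.2.1 + q.2.2.2 = c}
      - #X * #Y * #Z ^ 2 = ∑ t ∈ univ.erase 0, A t * B t ^ 2 * ψ (-(t * c)) := by
    rw [card_mul_card_filter_eq hψ, ← add_sum_erase _ _ (mem_univ 0)]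
    simp [A, B]
  rw [hsplit]
  calc ‖∑ t ∈ univ.erase 0, A t * B t ^ 2 * ψ (-(t * c))‖
      ≤ ∑ t ∈ univ.erase 0, ‖A t‖ * ‖B t‖ ^ 2 := by
        refine (norm_sum_le _ _).trans (sum_le_sum fun t _ => ?_)
        rw [norm_mul, norm_mul, norm_pow, norm_apply, mul_one]
    _ ≤ ∑ t ∈ univ.erase 0, √(Fintype.card F * #X * #Y) * ‖B t‖ ^ 2 := by
        gcongr with t ht
        exact norm_sum_sum_mul_mul_le hψ (ne_of_mem_erase ht) X Y
    _ ≤ ∑ t : F, √(Fintype.card F * #X * #Y) * ‖B t‖ ^ 2 :=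
        sum_le_univ_sum_of_nonneg fun _ => by positivity
    _ = √(Fintype.card F * #X * #Y) * (Fintype.card F * #Z) := by
        rw [← mul_sum, sum_norm_sq_sum_mul hψ]

lemma abs_card_filter_sub_div_le (hψ : ψ.IsPrimitive) (X Y Z : Finset F) (c : F) :
    |(#{q ∈ X ×ˢ Y ×ˢ Z ×ˢ Z | q.1 * q.2.1 + q.2.2.1 + q.2.2.2 = c} : ℝ)
        - #X * #Y * #Z ^ 2 / Fintype.card F| ≤ √(Fintype.card F * #X * #Y) * #Z := by
  set T := #{q ∈ X ×ˢ Y ×ˢ Z ×ˢ Z | q.1 * q.2.1 + q.2.2.1 + q.2.2.2 = c}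
  have hq : (0 : ℝ) < Fintype.card F := by exact_mod_cast Fintype.card_pos
  have key := norm_card_mul_card_filter_sub_le hψ X Y Z c
  rw [show (Fintype.card F : ℂ) * T - #X * #Y * #Z ^ 2
      = ((Fintype.card F * T - #X * #Y * #Z ^ 2 : ℝ) : ℂ) by push_cast; rfl,
    Complex.norm_real, Real.norm_eq_abs] at key
  rw [show (T : ℝ) - #X * #Y * #Z ^ 2 / Fintype.card F
      = (Fintype.card F * T - #X * #Y * #Z ^ 2) / Fintype.card F by field_simp,
    abs_div, abs_of_pos hq, div_le_iff₀ hq]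
  exact key.trans_eq (by ring)

end AddChar

lemma sqrt_mul_mul_mul_lt_div {p x y z : ℝ} (hp : 0 < p) (h : p ^ 3 < x * y * z ^ 2) :
    √(p * x * y) * z < x * y * z ^ 2 / p := by
  have hN : 0 < x * y * z ^ 2 := (by positivity : (0 : ℝ) < p ^ 3).trans h
  have hxy : 0 < x * y := by
    by_contra! hxy
    exact hN.not_ge (mul_nonpos_of_nonpos_of_nonneg hxy (sq_nonneg z))
  refine lt_of_pow_lt_pow_left₀ 2 (div_pos hN hp).le ?_
  rw [mul_pow, Real.sq_sqrt (by rw [mul_assoc]; exact (mul_pos hp hxy).le), div_pow,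
    lt_div_iff₀ (by positivity)]
  nlinarith [mul_lt_mul_of_pos_right h hN]

lemma ZMod.natCast_injOn_of_subset_range {p : ℕ} {W : Finset ℕ} (hW : W ⊆ range p) :
    Set.InjOn (Nat.cast : ℕ → ZMod p) W :=
  (CharP.natCast_injOn_Iio (ZMod p) p).mono fun _ hn => mem_range.mp (hW hn)

lemma card_filter_natCast_modEq_eq {p : ℕ} {X Y Z : Finset ℕ} (hX : X ⊆ range p)
    (hY : Y ⊆ range p) (hZ : Z ⊆ range p) (lam : ℤ) :
    #{q ∈ X ×ˢ Y ×ˢ Z ×ˢ Z | ((q.1 * q.2.1 + q.2.2.1 + q.2.2.2 : ℕ) : ℤ) ≡ lam [ZMOD p]}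
      = #{q ∈ X.image (Nat.cast : ℕ → ZMod p) ×ˢ Y.image Nat.cast ×ˢ Z.image Nat.cast ×ˢ
          Z.image Nat.cast | q.1 * q.2.1 + q.2.2.1 + q.2.2.2 = (lam : ZMod p)} := by
  simp only [← prodMap_image_product, filter_image]
  rw [card_image_of_injOn]
  · refine congrArg card (filter_congr fun q _ => ?_)
    rw [← ZMod.intCast_eq_intCast_iff]
    push_cast
    rfl
  · refine Set.InjOn.mono (filter_subset _ _) ?_
    rw [coe_product, coe_product, coe_product]
    exact (ZMod.natCast_injOn_of_subset_range hX).prodMap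
      ((ZMod.natCast_injOn_of_subset_range hY).prodMap
        ((ZMod.natCast_injOn_of_subset_range hZ).prodMap
          (ZMod.natCast_injOn_of_subset_range hZ)))

/-- **Lemma (ternary congruence `x·y + z₁ + z₂ ≡ λ`).**
For a prime `p`, subsets `X, Y, Z ⊆ {0, …, p−1}` and an integer `λ`, the number `T`
of quadruples `(x, y, z₁, z₂) ∈ X × Y × Z × Z` with `x·y + z₁ + z₂ ≡ λ (mod p)`
satisfies `|T − |X|·|Y|·|Z|²/p| ≤ √(p·|X|·|Y|)·|Z|`; in particular, if
`|X|·|Y|·|Z|² > p³` then `T > 0`. -/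
theorem stmt_5 (p : ℕ) (hp : p.Prime) (X Y Z : Finset ℕ)
    (hX : X ⊆ Finset.range p) (hY : Y ⊆ Finset.range p) (hZ : Z ⊆ Finset.range p)
    (lam : ℤ) :
    abs (((((X ×ˢ Y ×ˢ Z ×ˢ Z).filter
          (fun q => ((q.1 * q.2.1 + q.2.2.1 + q.2.2.2 : ℕ) : ℤ) ≡ lam [ZMOD p])).card : ℝ)
        - (X.card : ℝ) * (Y.card : ℝ) * (Z.card : ℝ) ^ 2 / p))
      ≤ Real.sqrt ((p : ℝ) * (X.card : ℝ) * (Y.card : ℝ)) * (Z.card : ℝ) ∧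
    ((p : ℝ) ^ 3 < (X.card : ℝ) * (Y.card : ℝ) * (Z.card : ℝ) ^ 2 →
      0 < ((X ×ˢ Y ×ˢ Z ×ˢ Z).filter
          (fun q => ((q.1 * q.2.1 + q.2.2.1 + q.2.2.2 : ℕ) : ℤ) ≡ lam [ZMOD p])).card) := by
  have : Fact p.Prime := ⟨hp⟩
  have hbound := AddChar.abs_card_filter_sub_div_le (ZMod.isPrimitive_stdAddChar p)
    (X.image Nat.cast) (Y.image Nat.cast) (Z.image Nat.cast) (lam : ZMod p)
  rw [← card_filter_natCast_modEq_eq hX hY hZ, ZMod.card,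
    card_image_of_injOn (ZMod.natCast_injOn_of_subset_range hX),
    card_image_of_injOn (ZMod.natCast_injOn_of_subset_range hY),
    card_image_of_injOn (ZMod.natCast_injOn_of_subset_range hZ)] at hbound
  refine ⟨hbound, fun hbig => ?_⟩
  have hgap := sqrt_mul_mul_mul_lt_div (by exact_mod_cast hp.pos) hbig
  rw [← Nat.cast_pos (α := ℝ)]
  linarith [(abs_le.mp hbound).1]
end

section
/- Let 0 < γ < 1/3. There exist positive constants c₁ = c₁(γ) and c₂ = c₂(γ) such that for every ε > 0 there exists N₀ with the following property: for all N ≥ N₀, the number of primes p ≤ N for which the two-sided bound c₁·N^{γ/2} ≤ (1/p)·∑_{x=0}^{p−1} |∑_{1 ≤ n ≤ N^γ} e^{2πi x F_n / p}| ≤ c₂·N^{γ/2} FAILS is at most ε·π(N). -/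
/-!
Let `M = ⌊N^γ⌋` and `S_p(x) = ∑_{n ≤ M} e(x F_n / p)`. By orthogonality of additive characters,
`∑_x |S_p(x)|²` and `∑_x |S_p(x)|⁴` are `p` times the number of solutions of `F_a ≡ F_b`,
resp. `F_a + F_b ≡ F_c + F_d (mod p)`, with indices in `[1, M]`. The diagonal gives at least `M`
solutions of the first congruence, so Hölder's inequality `(∑|S|²)³ ≤ (∑|S|)² ∑|S|⁴` and the
power mean inequality pin the mean of `|S_p|` between constant multiples of `√M` as soon as
the second congruence has `O(M²)` solutions.

Over the integers, `F_a + F_b = F_c + F_d` has at most `12 M²` solutions. Every other quadruple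
gives a nonzero integer below `2^(M+1)`, with at most `M + 1` prime factors, so by double
counting at most `2 M³ ≤ 2 N^(3γ)` primes see more than `M²` further solutions modulo `p`.
Since `3γ < 1`, this is `o(π(N))` by Chebyshev's bound `π(N) ≫ N / log N`.
-/

open Finset Nat

namespace AddChar

variable {R : Type*} [CommRing R] [Fintype R] [DecidableEq R] {ψ : AddChar R ℂ}

theorem sum_norm_sum_mul_sq (hψ : ψ.IsPrimitive) {ι : Type*} (s : Finset ι) (g : ι → R) :
    ∑ x, ‖∑ i ∈ s, ψ (x * g i)‖ ^ 2 = Fintype.card R * #{q ∈ s ×ˢ s | g q.1 = g q.2} := by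
  have hsq (x : R) : (‖∑ i ∈ s, ψ (x * g i)‖ : ℂ) ^ 2
      = ∑ q ∈ s ×ˢ s, ψ (x * (g q.1 - g q.2)) := by
    rw [← Complex.mul_conj', map_sum, sum_mul_sum, sum_product]
    simp_rw [← map_neg_eq_conj, ← map_add_eq_mul, mul_sub, sub_eq_add_neg]
  apply Complex.ofReal_injective
  push_cast
  simp_rw [hsq]
  rw [sum_comm]
  simp_rw [sum_mulShift _ hψ, sub_eq_zero]
  simp [sum_ite, mul_comm]

theorem sum_norm_sum_mul_pow_four (hψ : ψ.IsPrimitive) {ι : Type*} (s : Finset ι) (g : ι → R) :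
    ∑ x, ‖∑ i ∈ s, ψ (x * g i)‖ ^ 4 =
      Fintype.card R * #{q ∈ (s ×ˢ s) ×ˢ (s ×ˢ s) | g q.1.1 + g q.1.2 = g q.2.1 + g q.2.2} := by
  have hsq (x : R) : ‖∑ i ∈ s, ψ (x * g i)‖ ^ 4
      = ‖∑ q ∈ s ×ˢ s, ψ (x * (g q.1 + g q.2))‖ ^ 2 := by
    rw [show 4 = 2 * 2 from rfl, pow_mul, ← norm_pow, sq (∑ i ∈ s, _), sum_mul_sum, sum_product]
    simp_rw [← map_add_eq_mul, mul_add]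
  simp_rw [hsq]
  exact sum_norm_sum_mul_sq hψ (s ×ˢ s) fun q => g q.1 + g q.2

end AddChar

lemma sum_range_natCast_eq_sum_zmod {α : Type*} [AddCommMonoid α] (p : ℕ) [NeZero p]
    (f : ZMod p → α) : ∑ x ∈ range p, f x = ∑ x, f x :=
  sum_nbij' (↑) ZMod.val (fun _ _ => mem_univ _) (fun x _ => mem_range.2 (ZMod.val_lt x))
    (fun _ hx => ZMod.val_cast_of_lt (mem_range.1 hx)) (fun x _ => ZMod.natCast_zmod_val x)
    fun _ _ => rfl

lemma sum_sq_pow_three_le {ι R : Type*} [CommRing R] [LinearOrder R] [IsStrictOrderedRing R]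
    (s : Finset ι) {a : ι → R} (ha : ∀ i ∈ s, 0 ≤ a i) :
    (∑ i ∈ s, a i ^ 2) ^ 3 ≤ (∑ i ∈ s, a i) ^ 2 * ∑ i ∈ s, a i ^ 4 := by
  set A := ∑ i ∈ s, a i
  set B := ∑ i ∈ s, a i ^ 2
  set C := ∑ i ∈ s, a i ^ 4
  have hB : 0 ≤ B := sum_nonneg fun i _ => sq_nonneg _
  have hC : 0 ≤ C := sum_nonneg fun i _ => by positivity
  have h₁ : B ^ 2 ≤ A * ∑ i ∈ s, a i ^ 3 :=
    sum_sq_le_sum_mul_sum_of_sq_le_mul s ha (fun i hi => pow_nonneg (ha i hi) 3)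
      fun i _ => le_of_eq (by ring)
  have h₂ : (∑ i ∈ s, a i ^ 3) ^ 2 ≤ B * C :=
    sum_sq_le_sum_mul_sum_of_sq_le_mul s (fun i _ => sq_nonneg _)
      (fun i hi => pow_nonneg (ha i hi) 4) fun i _ => le_of_eq (by ring)
  rcases hB.eq_or_lt with hB0 | hBpos
  · rw [← hB0]; simpa using mul_nonneg (sq_nonneg A) hC
  have : B * B ^ 3 ≤ B * (A ^ 2 * C) :=
    calc B * B ^ 3 = (B ^ 2) ^ 2 := by ring
      _ ≤ (A * ∑ i ∈ s, a i ^ 3) ^ 2 := pow_le_pow_left₀ (sq_nonneg B) h₁ 2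
      _ = A ^ 2 * (∑ i ∈ s, a i ^ 3) ^ 2 := by ring
      _ ≤ A ^ 2 * (B * C) := mul_le_mul_of_nonneg_left h₂ (sq_nonneg A)
      _ = B * (A ^ 2 * C) := by ring
  exact le_of_mul_le_mul_left this hBpos

lemma fib_injOn_ne_one : Set.InjOn fib {1}ᶜ := by
  intro a ha b hb hab
  simp only [Set.mem_compl_iff, Set.mem_singleton_iff] at ha hb
  rcases Nat.lt_or_ge a 2 with ha2 | ha2 <;> rcases Nat.lt_or_ge b 2 with hb2 | hb2
  · omega
  · have : a = 0 := by omega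
    subst this; exact (fib_eq_zero.1 hab.symm).symm
  · have : b = 0 := by omega
    subst this; exact fib_eq_zero.1 hab
  · exact fib_strictMonoOn.injOn ha2 hb2 hab

lemma card_filter_fib_eq_le (s : Finset ℕ) (v : ℕ) : #{n ∈ s | fib n = v} ≤ 2 := by
  have h : #({n ∈ s | fib n = v}.erase 1) ≤ 1 :=
    card_le_one.2 fun a ha b hb => fib_injOn_ne_one (ne_of_mem_erase ha) (ne_of_mem_erase hb)
      (((mem_filter.1 (mem_of_mem_erase ha)).2).trans (mem_filter.1 (mem_of_mem_erase hb)).2.symm)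
  have := pred_card_le_card_erase (s := {n ∈ s | fib n = v}) (a := 1)
  omega

lemma card_filter_fib_window_le (M S : ℕ) :
    #{n ∈ Icc 1 M | fib n ≤ S ∧ S ≤ 2 * fib n} ≤ 3 := by
  set W := {n ∈ Icc 1 M | fib n ≤ S ∧ S ≤ 2 * fib n}
  have hgap : ∀ a ∈ W, ∀ b ∈ W, 2 ≤ a → b < a + 2 := by
    intro a ha b hb ha2
    by_contra! hab
    have h1 : fib a < fib (a + 1) := fib_lt_fib_succ ha2
    have h2 : fib (a + 2) ≤ fib b := fib_mono hab
    rw [fib_add_two] at h2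
    simp only [W, mem_filter] at ha hb
    omega
  have hW : #(W.erase 1) ≤ 2 := by
    rcases (W.erase 1).eq_empty_or_nonempty with h | h
    · simp [h]
    set m := (W.erase 1).min' h
    have hm : m ∈ W.erase 1 := min'_mem _ h
    have h2 (n) (hn : n ∈ W.erase 1) : 2 ≤ n := by
      have := (mem_Icc.1 (mem_filter.1 (mem_of_mem_erase hn)).1).1
      have := ne_of_mem_erase hn
      omega
    have hsub : W.erase 1 ⊆ Icc m (m + 1) := fun n hn => mem_Icc.2 ⟨min'_le _ _ hn,
      Nat.lt_succ_iff.1 (hgap m (mem_of_mem_erase hm) n (mem_of_mem_erase hn) (h2 m hm))⟩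
    calc #(W.erase 1) ≤ #(Icc m (m + 1)) := card_le_card hsub
      _ = 2 := by rw [Nat.card_Icc]; omega
  have := pred_card_le_card_erase (s := W) (a := 1)
  omega

lemma card_fib_add_eq_le (M S : ℕ) :
    #{q ∈ Icc 1 M ×ˢ Icc 1 M | fib q.1 + fib q.2 = S} ≤ 12 := by
  set A := {q ∈ Icc 1 M ×ˢ Icc 1 M | fib q.1 + fib q.2 = S}
  set A₁ := {q ∈ A | fib q.2 ≤ fib q.1}
  have hA₁ : #A₁ ≤ 2 * 3 := by
    refine (card_le_mul_card_image_of_maps_to (f := Prod.fst)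
      (t := {n ∈ Icc 1 M | fib n ≤ S ∧ S ≤ 2 * fib n}) ?_ 2 fun c _ => ?_).trans
      (Nat.mul_le_mul_left 2 (card_filter_fib_window_le M S))
    · intro q hq
      simp only [A₁, A, mem_filter, mem_product] at hq ⊢
      exact ⟨hq.1.1.1, by omega, by omega⟩
    · refine (card_le_card_of_injOn Prod.snd (t := {d ∈ Icc 1 M | fib d = S - fib c})
        ?_ ?_).trans (card_filter_fib_eq_le _ _)
      · intro q hq
        simp only [A₁, A, mem_filter, mem_product, coe_filter, Set.mem_ofPred_eq] at hq ⊢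
        obtain ⟨⟨⟨⟨-, hq₂⟩, hS⟩, -⟩, rfl⟩ := hq
        exact ⟨hq₂, by omega⟩
      · intro q hq q' hq' h
        simp only [A₁, A, mem_filter, coe_filter, Set.mem_ofPred_eq] at hq hq'
        exact Prod.ext (hq.2.trans hq'.2.symm) h
  have hA : A ⊆ A₁ ∪ A₁.image Prod.swap := by
    intro q hq
    rcases le_total (fib q.2) (fib q.1) with h | h
    · exact mem_union_left _ (mem_filter.2 ⟨hq, h⟩)
    · refine mem_union_right _ (mem_image.2 ⟨q.swap, mem_filter.2 ⟨?_, h⟩, q.swap_swap⟩)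
      simp only [A, mem_filter, mem_product, Prod.fst_swap, Prod.snd_swap] at hq ⊢
      exact ⟨hq.1.symm, by omega⟩
  calc #A ≤ #A₁ + #(A₁.image Prod.swap) := (card_le_card hA).trans (card_union_le _ _)
    _ ≤ #A₁ + #A₁ := Nat.add_le_add_left card_image_le _
    _ ≤ 12 := by omega

lemma card_fib_add_eq_fib_add_le (M : ℕ) :
    #{q ∈ (Icc 1 M ×ˢ Icc 1 M) ×ˢ (Icc 1 M ×ˢ Icc 1 M) |
      fib q.1.1 + fib q.1.2 = fib q.2.1 + fib q.2.2} ≤ 12 * M ^ 2 := by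
  rw [card_filter, sum_product]
  calc ∑ u ∈ Icc 1 M ×ˢ Icc 1 M, ∑ v ∈ Icc 1 M ×ˢ Icc 1 M,
        (if fib u.1 + fib u.2 = fib v.1 + fib v.2 then 1 else 0)
      ≤ ∑ _u ∈ Icc 1 M ×ˢ Icc 1 M, 12 := sum_le_sum fun u _ => by
        rw [← card_filter]
        simpa only [eq_comm] using card_fib_add_eq_le M (fib u.1 + fib u.2)
    _ = 12 * M ^ 2 := by simp [mul_comm, sq]

lemma Nat.two_pow_card_primeFactors_le {n : ℕ} (hn : n ≠ 0) : 2 ^ #n.primeFactors ≤ n :=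
  calc 2 ^ #n.primeFactors ≤ ∏ p ∈ n.primeFactors, p :=
        pow_card_le_prod _ _ _ fun _ hp => (prime_of_mem_primeFactors hp).two_le
    _ ≤ n := le_of_dvd (pos_of_ne_zero hn) (prod_primeFactors_dvd n)

lemma card_filter_prime_modEq_le (s : Finset ℕ) {a b k : ℕ} (hab : a ≠ b) (ha : a ≤ 2 ^ k)
    (hb : b ≤ 2 ^ k) : #{p ∈ s | p.Prime ∧ a ≡ b [MOD p]} ≤ k := by
  set D := ((b : ℤ) - a).natAbs
  have hD : D ≠ 0 := by omega
  have hsub : {p ∈ s | p.Prime ∧ a ≡ b [MOD p]} ⊆ D.primeFactors := fun p hp => by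
    obtain ⟨-, hp, hmod⟩ := mem_filter.1 hp
    exact mem_primeFactors.2 ⟨hp, Int.natCast_dvd.1 (Nat.modEq_iff_dvd.1 hmod), hD⟩
  refine (Nat.pow_le_pow_iff_right one_lt_two).1 ?_
  calc 2 ^ #{p ∈ s | p.Prime ∧ a ≡ b [MOD p]} ≤ 2 ^ #D.primeFactors :=
        Nat.pow_le_pow_right two_pos (card_le_card hsub)
    _ ≤ D := two_pow_card_primeFactors_le hD
    _ ≤ 2 ^ k := by omega

lemma Nat.fib_le_two_pow (n : ℕ) : fib n ≤ 2 ^ n := by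
  induction n using Nat.twoStepInduction with
  | zero => simp
  | one => simp
  | more n ih₁ ih₂ =>
    rw [fib_add_two, pow_succ, pow_succ]
    have := Nat.pow_le_pow_right two_pos n.le_succ
    omega

lemma fib_add_fib_le_two_pow {M a b : ℕ} (ha : a ∈ Icc 1 M) (hb : b ∈ Icc 1 M) :
    fib a + fib b ≤ 2 ^ (M + 1) := by
  have h₁ := (fib_le_two_pow a).trans (Nat.pow_le_pow_right two_pos (mem_Icc.1 ha).2)
  have h₂ := (fib_le_two_pow b).trans (Nat.pow_le_pow_right two_pos (mem_Icc.1 hb).2)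
  rw [pow_succ]
  omega

def fibCollisions (p M : ℕ) : ℕ :=
  #{q ∈ (Icc 1 M ×ˢ Icc 1 M) ×ˢ (Icc 1 M ×ˢ Icc 1 M) |
    fib q.1.1 + fib q.1.2 ≡ fib q.2.1 + fib q.2.2 [MOD p]}

lemma card_filter_prime_fibCollisions_le (P : Finset ℕ) (M : ℕ) :
    #{p ∈ P | p.Prime ∧ 13 * M ^ 2 < fibCollisions p M} ≤ 2 * M ^ 3 := by
  set Q := (Icc 1 M ×ˢ Icc 1 M) ×ˢ (Icc 1 M ×ˢ Icc 1 M)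
  let σ₁ (q : (ℕ × ℕ) × ℕ × ℕ) : ℕ := fib q.1.1 + fib q.1.2
  let σ₂ (q : (ℕ × ℕ) × ℕ × ℕ) : ℕ := fib q.2.1 + fib q.2.2
  let r (p : ℕ) (q : (ℕ × ℕ) × ℕ × ℕ) : Prop := p.Prime ∧ σ₁ q ≠ σ₂ q ∧ σ₁ q ≡ σ₂ q [MOD p]
  set B := {p ∈ P | p.Prime ∧ 13 * M ^ 2 < fibCollisions p M}
  have hmany : ∀ p ∈ B, M ^ 2 + 1 ≤ #(Q.bipartiteAbove r p) := by
    intro p hp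
    obtain ⟨-, hp, hlt⟩ := mem_filter.1 hp
    have hexact : #{q ∈ Q | σ₁ q = σ₂ q} ≤ 12 * M ^ 2 := card_fib_add_eq_fib_add_le M
    have hsplit : fibCollisions p M ≤ #{q ∈ Q | σ₁ q = σ₂ q} + #(Q.bipartiteAbove r p) := by
      refine (card_le_card fun q hq => ?_).trans (card_union_le _ _)
      obtain ⟨hq, hmod⟩ := mem_filter.1 hq
      by_cases h : σ₁ q = σ₂ q
      · exact mem_union_left _ (mem_filter.2 ⟨hq, h⟩)
      · exact mem_union_right _ (mem_filter.2 ⟨hq, hp, h, hmod⟩)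
    omega
  have hfew : ∀ q ∈ Q, #(B.bipartiteBelow r q) ≤ M + 1 := by
    intro q hq
    by_cases h : σ₁ q = σ₂ q
    · simp [bipartiteBelow, r, h]
    simp only [Q, mem_product] at hq
    refine le_of_eq_of_le (congrArg card (filter_congr fun p _ => ?_))
      (card_filter_prime_modEq_le B h (fib_add_fib_le_two_pow hq.1.1 hq.1.2)
        (fib_add_fib_le_two_pow hq.2.1 hq.2.2))
    simp [r, h]
  have hcount := card_mul_le_card_mul r hmany hfew
  have hQ : #Q = M ^ 4 := by simp [Q]; ring
  rw [hQ] at hcount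
  have : M ^ 4 ≤ M ^ 5 := by
    rcases M.eq_zero_or_pos with rfl | hM
    · simp
    · exact Nat.pow_le_pow_right hM (by norm_num)
  nlinarith

noncomputable def fibExpSumMean (p M : ℕ) : ℝ :=
  (1 / (p : ℝ)) * ∑ x ∈ range p,
    ‖∑ n ∈ Icc 1 M, Complex.exp (2 * (Real.pi : ℂ) * Complex.I * (x : ℂ) *
      ((fib n : ℕ) : ℂ) / (p : ℂ))‖

lemma fibExpSumMean_eq (p M : ℕ) [NeZero p] :
    fibExpSumMean p M =
      (∑ x : ZMod p, ‖∑ n ∈ Icc 1 M, ZMod.stdAddChar (x * (fib n : ZMod p))‖) / p := by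
  rw [fibExpSumMean, one_div_mul_eq_div, ← sum_range_natCast_eq_sum_zmod]
  congr 2 with x
  congr 2 with n
  rw [← Nat.cast_mul, ZMod.stdAddChar_apply, ZMod.toCircle_natCast]
  push_cast
  ring_nf

lemma fibExpSumMean_moments (p : ℕ) [NeZero p] {M : ℕ} (hM : 0 < M) {K : ℝ}
    (hC : (fibCollisions p M : ℝ) ≤ K * M ^ 2) :
    M ≤ K * fibExpSumMean p M ^ 2 ∧ fibExpSumMean p M ^ 4 ≤ K * M ^ 2 := by
  have hψ := ZMod.isPrimitive_stdAddChar p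
  have hp : (0 : ℝ) < p := by exact_mod_cast NeZero.pos p
  set a : ZMod p → ℝ := fun x => ‖∑ n ∈ Icc 1 M, ZMod.stdAddChar (x * (fib n : ZMod p))‖
  have h2 : p * M ≤ ∑ x, a x ^ 2 := by
    rw [AddChar.sum_norm_sum_mul_sq hψ, ZMod.card]
    gcongr
    calc M = #(Icc 1 M).diag := by simp
      _ ≤ _ := card_le_card fun q hq => by
        obtain ⟨hq, he⟩ := mem_diag.1 hq
        exact mem_filter.2 ⟨mem_product.2 ⟨hq, he ▸ hq⟩, by rw [he]⟩
  have h4 : ∑ x, a x ^ 4 ≤ p * (K * M ^ 2) := by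
    refine le_of_eq_of_le ?_ (mul_le_mul_of_nonneg_left hC hp.le)
    rw [AddChar.sum_norm_sum_mul_pow_four hψ, ZMod.card, fibCollisions]
    congr 3
    refine filter_congr fun q _ => ?_
    rw [← Nat.cast_add, ← Nat.cast_add, ZMod.natCast_eq_natCast_iff]
  rw [fibExpSumMean_eq]
  set A := ∑ x, a x
  rw [div_pow, div_pow, mul_div_assoc', le_div_iff₀ (by positivity), div_le_iff₀ (by positivity)]
  constructor
  · have hM' : (0 : ℝ) < p * M ^ 2 := by positivity
    refine le_of_mul_le_mul_left ?_ hM'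
    calc (p * M ^ 2 * (M * p ^ 2) : ℝ) = (p * M) ^ 3 := by ring
      _ ≤ (∑ x, a x ^ 2) ^ 3 := by gcongr
      _ ≤ A ^ 2 * ∑ x, a x ^ 4 := sum_sq_pow_three_le univ fun x _ => norm_nonneg _
      _ ≤ A ^ 2 * (p * (K * M ^ 2)) := by gcongr
      _ = p * M ^ 2 * (K * A ^ 2) := by ring
  · calc A ^ 4 ≤ #(univ : Finset (ZMod p)) ^ 3 * ∑ x, a x ^ 4 :=
          pow_sum_le_card_mul_sum_pow (fun x _ => norm_nonneg _) 3
      _ ≤ p ^ 3 * (p * (K * M ^ 2)) := by rw [Finset.card_univ, ZMod.card]; gcongr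
      _ = K * M ^ 2 * p ^ 4 := by ring

lemma fibExpSumMean_bounds (p : ℕ) [NeZero p] {M : ℕ} {X : ℝ} (hX : 0 ≤ X) (hM : 0 < M)
    (hXM : X ^ 2 ≤ 2 * M) (hMX : M ≤ X ^ 2) (hC : fibCollisions p M ≤ 13 * M ^ 2) :
    X / 6 ≤ fibExpSumMean p M ∧ fibExpSumMean p M ≤ 2 * X := by
  obtain ⟨hlow, hup⟩ := fibExpSumMean_moments p hM (K := 13) (by exact_mod_cast hC)
  have hμ : 0 ≤ fibExpSumMean p M := by unfold fibExpSumMean; positivity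
  constructor
  · refine (pow_le_pow_iff_left₀ (by positivity) hμ two_ne_zero).1 ?_
    linarith
  · refine (pow_le_pow_iff_left₀ hμ (by positivity) four_ne_zero).1 ?_
    have : (M : ℝ) ^ 2 ≤ (X ^ 2) ^ 2 := by gcongr
    nlinarith [pow_nonneg hX 4]

lemma le_two_mul_floor {K : Type*} [Field K] [LinearOrder K] [IsStrictOrderedRing K]
    [FloorSemiring K] {x : K} (hx : 1 ≤ x) : x ≤ 2 * ⌊x⌋₊ := by
  have := Nat.lt_floor_add_one x
  have : (1 : K) ≤ ⌊x⌋₊ := by exact_mod_cast Nat.floor_pos.2 hx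
  linarith

lemma eventually_rpow_le_mul_primeCounting {α c : ℝ} (hα : α < 1) (hc : 0 < c) :
    ∀ᶠ N : ℕ in Filter.atTop, (N : ℝ) ^ α ≤ c * N.primeCounting := by
  have hlog : ∀ᶠ N : ℕ in Filter.atTop, Real.log N ≤ c / 2 * (N : ℝ) ^ (1 - α) := by
    have := (isLittleO_log_rpow_atTop (sub_pos.2 hα)).def (half_pos hc)
    filter_upwards [tendsto_natCast_atTop_atTop.eventually this] with N hN
    rw [Real.norm_eq_abs, Real.norm_of_nonneg (by positivity)] at hN
    exact (le_abs_self _).trans hN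
  have hlog1 : ∀ᶠ N : ℕ in Filter.atTop, Real.log (N + 1) ≤ N / 10 := by
    have := Real.isLittleO_log_id_atTop.def (show (0 : ℝ) < 1 / 20 by norm_num)
    filter_upwards [(Filter.tendsto_atTop_add_const_right _ 1
      tendsto_natCast_atTop_atTop).eventually this, Filter.eventually_ge_atTop 1] with N hN hN1
    have : (1 : ℝ) ≤ N := by exact_mod_cast hN1
    simp only [id, Real.norm_eq_abs] at hN
    rw [abs_of_nonneg (by positivity : (0 : ℝ) ≤ N + 1)] at hN
    linarith [le_abs_self (Real.log (N + 1))]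
  filter_upwards [hlog, hlog1, Filter.eventually_ge_atTop 2] with N hlogN hlogN1 hN2
  have hψ := (Chebyshev.psi_ge N).trans (Chebyshev.psi_le_primeCounting_mul_log N)
  have hlogpos : 0 < Real.log N := Real.log_pos (by exact_mod_cast hN2)
  have hlog2 := Real.log_two_gt_d9
  have hN : (0:ℝ) < N := by positivity
  have hprod : (N : ℝ) ^ α * (N : ℝ) ^ (1 - α) = N := by
    rw [← Real.rpow_add hN]; simp
  refine le_of_mul_le_mul_right ?_ hlogpos
  calc (N : ℝ) ^ α * Real.log N ≤ (N : ℝ) ^ α * (c / 2 * (N : ℝ) ^ (1 - α)) :=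
        mul_le_mul_of_nonneg_left hlogN (by positivity)
    _ = c / 2 * ((N : ℝ) ^ α * (N : ℝ) ^ (1 - α)) := by ring
    _ = c * (N / 2) := by rw [hprod]; ring
    _ ≤ c * (N.primeCounting * Real.log N) := by
        gcongr
        linarith [mul_le_mul_of_nonneg_left hlog2.le hN.le]
    _ = _ := by ring

/-- **Theorem 6 (discrete Littlewood problem for Fibonacci numbers).**
For `0 < γ < 1/3` there are constants `c₁, c₂ > 0` such that for every `ε > 0`
and all sufficiently large `N`, for all but at most `ε·π(N)` primes `p ≤ N` one has
`c₁·N^{γ/2} ≤ (1/p)·∑_{x=0}^{p−1} |∑_{1 ≤ n ≤ N^γ} e^{2πi x F_n / p}| ≤ c₂·N^{γ/2}`. -/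
theorem stmt_9 (γ : ℝ) (hγ0 : 0 < γ) (hγ : γ < 1 / 3) :
    ∃ c₁ c₂ : ℝ, 0 < c₁ ∧ 0 < c₂ ∧
      ∀ ε : ℝ, 0 < ε → ∃ N₀ : ℕ, ∀ N : ℕ, N₀ ≤ N →
        ({p : ℕ | p ≤ N ∧ p.Prime ∧
            ¬ (c₁ * (N : ℝ) ^ (γ / 2) ≤
                (1 / (p : ℝ)) * ∑ x ∈ Finset.range p,
                  ‖∑ n ∈ Finset.Icc 1 ⌊(N : ℝ) ^ γ⌋₊,
                    Complex.exp (2 * (Real.pi : ℂ) * Complex.I * (x : ℂ) *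
                      ((Nat.fib n : ℕ) : ℂ) / (p : ℂ))‖ ∧
              (1 / (p : ℝ)) * ∑ x ∈ Finset.range p,
                  ‖∑ n ∈ Finset.Icc 1 ⌊(N : ℝ) ^ γ⌋₊,
                    Complex.exp (2 * (Real.pi : ℂ) * Complex.I * (x : ℂ) *
                      ((Nat.fib n : ℕ) : ℂ) / (p : ℂ))‖ ≤
                c₂ * (N : ℝ) ^ (γ / 2))}.ncard : ℝ)
          ≤ ε * (N.primeCounting : ℝ) := by
  refine ⟨1 / 6, 2, by norm_num, by norm_num, fun ε hε => ?_⟩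
  obtain ⟨N₀, hN₀⟩ := Filter.eventually_atTop.1
    ((eventually_rpow_le_mul_primeCounting (by linarith : 3 * γ < 1) (half_pos hε)).and
      (Filter.eventually_ge_atTop 1))
  refine ⟨N₀, fun N hN => ?_⟩
  obtain ⟨hπ, hN1⟩ := hN₀ N hN
  set M := ⌊(N : ℝ) ^ γ⌋₊
  have hNγ : 1 ≤ (N : ℝ) ^ γ := Real.one_le_rpow (by exact_mod_cast hN1) hγ0.le
  have hM : 0 < M := Nat.floor_pos.2 hNγ
  have hMN : (M : ℝ) ≤ (N : ℝ) ^ γ := Nat.floor_le (by positivity)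
  have hNM : (N : ℝ) ^ γ ≤ 2 * M := le_two_mul_floor hNγ
  have hsq : ((N : ℝ) ^ (γ / 2)) ^ 2 = (N : ℝ) ^ γ := by
    rw [← Real.rpow_mul_natCast (by positivity)]; ring_nf
  have hbad : {p : ℕ | p ≤ N ∧ p.Prime ∧ ¬(1 / 6 * (N : ℝ) ^ (γ / 2) ≤ fibExpSumMean p M ∧
      fibExpSumMean p M ≤ 2 * (N : ℝ) ^ (γ / 2))} ⊆
      {p ∈ range (N + 1) | p.Prime ∧ 13 * M ^ 2 < fibCollisions p M} := by
    rintro p ⟨hpN, hp, hfail⟩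
    have := NeZero.of_pos hp.pos
    refine mem_filter.2 ⟨mem_range.2 (by omega), hp, not_le.1 fun hC => hfail ?_⟩
    rw [one_div_mul_eq_div]
    exact fibExpSumMean_bounds p (by positivity) hM (hsq ▸ hNM) (hsq ▸ hMN) hC
  calc _ ≤ (#{p ∈ range (N + 1) | p.Prime ∧ 13 * M ^ 2 < fibCollisions p M} : ℝ) := by
        rw [← Set.ncard_coe_finset]
        exact Nat.cast_le.2 (Set.ncard_le_ncard hbad (finite_toSet _))
    _ ≤ 2 * (M : ℝ) ^ 3 := by exact_mod_cast card_filter_prime_fibCollisions_le _ M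
    _ ≤ 2 * (N : ℝ) ^ (3 * γ) := by
        rw [show 3 * γ = γ * (3 : ℕ) by push_cast; ring, Real.rpow_mul_natCast (by positivity)]
        gcongr
    _ ≤ ε * N.primeCounting := by linarith
end

section
/- Let p be an odd prime and let n > n' ≥ 1 be integers with 2(n + n') < z(p). Then F_{2n} ≢ F_{2n'} (mod p). In particular, the Fibonacci numbers F_{2n} (mod p) are pairwise distinct as n ranges over any set of positive integers n with 4n < z(p). -/
/-!
If `F_{2n} ≡ F_{2n'} (mod p)`, write `2n = a + b` and `2n' = a - b` with `a = n + n'`,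
`b = n - n'`. Extending `F` to negative indices, the addition formula factors
`F_{a+b} - F_{a-b}` as `F_b L_a` for even `b` and as `F_a L_b` for odd `b`, where `L` is the
Lucas sequence. Since `F_{2m} = F_m L_m`, the prime `p` then divides `F_{2a}` or `F_{2b}`,
and both indices are positive and at most `2(n + n') < z(p)`.
-/

/-- The order of appearance `z(k)`: the least positive integer `ℓ`
such that `k` divides the Fibonacci number `F_ℓ`. -/
noncomputable def orderOfAppearance (k : ℕ) : ℕ :=
  sInf {ℓ : ℕ | 0 < ℓ ∧ k ∣ Nat.fib ℓ}

open Int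

namespace Int

def lucas (n : ℤ) : ℤ := fib (n - 1) + fib (n + 1)

theorem fib_add_one_eq_fib_sub_one_add (n : ℤ) : fib (n + 1) = fib (n - 1) + fib n := by
  have := fib_add_two (n - 1)
  rwa [sub_add_cancel, show n - 1 + 2 = n + 1 by ring] at this

theorem fib_two_mul_eq_fib_mul_lucas (n : ℤ) : fib (2 * n) = fib n * lucas n := by
  rw [two_mul, fib_add, lucas, fib_add_one_eq_fib_sub_one_add n]
  ring

theorem lucas_dvd_fib_two_mul (n : ℤ) : lucas n ∣ fib (2 * n) :=
  fib_two_mul_eq_fib_mul_lucas n ▸ dvd_mul_left _ _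

theorem fib_dvd_fib_two_mul (n : ℤ) : fib n ∣ fib (2 * n) :=
  fib_two_mul_eq_fib_mul_lucas n ▸ dvd_mul_right _ _

theorem fib_sub (a b : ℤ) : fib (a - b) = fib (a - 1) * fib (-b) + fib a * fib (-(b - 1)) := by
  rw [sub_eq_add_neg, fib_add, neg_sub, neg_add_eq_sub]

theorem fib_add_sub_fib_sub_of_even {b : ℤ} (hb : Even b) (a : ℤ) :
    fib (a + b) - fib (a - b) = fib b * lucas a := by
  have hb₁ : ¬Even (b - 1) := by simpa [Int.even_sub_one] using hb
  rw [fib_sub, fib_neg, fib_neg, if_pos hb, if_neg hb₁, fib_add, lucas,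
    fib_add_one_eq_fib_sub_one_add a, fib_add_one_eq_fib_sub_one_add b]
  ring

theorem fib_add_sub_fib_sub_of_odd {b : ℤ} (hb : Odd b) (a : ℤ) :
    fib (a + b) - fib (a - b) = fib a * lucas b := by
  have hb₁ : Even (b - 1) := hb.sub_odd odd_one
  rw [fib_sub, fib_neg, fib_neg, if_neg (Int.not_even_iff_odd.mpr hb), if_pos hb₁, fib_add,
    lucas]
  ring

theorem dvd_fib_two_mul_or_of_dvd_fib_add_sub_fib_sub {p : ℤ} (hp : Prime p) {a b : ℤ}
    (h : p ∣ fib (a + b) - fib (a - b)) : p ∣ fib (2 * a) ∨ p ∣ fib (2 * b) := by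
  rcases Int.even_or_odd b with hb | hb
  · rw [fib_add_sub_fib_sub_of_even hb] at h
    rcases hp.dvd_or_dvd h with h | h
    · exact .inr (h.trans (fib_dvd_fib_two_mul b))
    · exact .inl (h.trans (lucas_dvd_fib_two_mul a))
  · rw [fib_add_sub_fib_sub_of_odd hb] at h
    rcases hp.dvd_or_dvd h with h | h
    · exact .inl (h.trans (fib_dvd_fib_two_mul a))
    · exact .inr (h.trans (lucas_dvd_fib_two_mul b))

end Int

theorem orderOfAppearance_le_of_dvd_fib {p : ℕ} {ℓ : ℤ} (hℓ : 0 < ℓ)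
    (h : (p : ℤ) ∣ fib ℓ) : (orderOfAppearance p : ℤ) ≤ ℓ := by
  lift ℓ to ℕ using hℓ.le
  rw [fib_natCast, Int.natCast_dvd_natCast] at h
  have hmem : ℓ ∈ {ℓ : ℕ | 0 < ℓ ∧ p ∣ Nat.fib ℓ} := ⟨by omega, h⟩
  exact_mod_cast Nat.sInf_le hmem

theorem fib_two_mul_not_modEq {p n n' : ℕ} (hp : p.Prime) (hlt : n' < n)
    (hz : 2 * (n + n') < orderOfAppearance p) :
    ¬Nat.fib (2 * n) ≡ Nat.fib (2 * n') [MOD p] := by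
  intro hmod
  have hdvd : (p : ℤ) ∣ fib ((n + n' : ℤ) + (n - n')) - fib ((n + n' : ℤ) - (n - n')) := by
    rw [show (n + n' : ℤ) + (n - n') = ((2 * n : ℕ) : ℤ) by push_cast; ring,
      show (n + n' : ℤ) - (n - n') = ((2 * n' : ℕ) : ℤ) by push_cast; ring,
      fib_natCast, fib_natCast]
    exact Nat.modEq_iff_dvd.mp hmod.symm
  rcases dvd_fib_two_mul_or_of_dvd_fib_add_sub_fib_sub (Nat.prime_iff_prime_int.mp hp) hdvd
    with h | h <;>
    exact absurd (orderOfAppearance_le_of_dvd_fib (by omega) h) (by omega)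

theorem stmt_10_general (p : ℕ) (hp : p.Prime) :
    (∀ n n' : ℕ, 1 ≤ n' → n' < n → 2 * (n + n') < orderOfAppearance p →
      ¬ (Nat.fib (2 * n) ≡ Nat.fib (2 * n') [MOD p])) ∧
    (∀ n m : ℕ, 1 ≤ n → 1 ≤ m →
      4 * n < orderOfAppearance p → 4 * m < orderOfAppearance p →
      Nat.fib (2 * n) ≡ Nat.fib (2 * m) [MOD p] → n = m) := by
  refine ⟨fun n n' _ hlt hz => fib_two_mul_not_modEq hp hlt hz,
    fun n m _ _ hn hm hmod => ?_⟩
  by_contra hne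
  rcases Nat.lt_or_gt_of_ne hne with h | h
  · exact fib_two_mul_not_modEq hp h (by omega) hmod.symm
  · exact fib_two_mul_not_modEq hp h (by omega) hmod

/-- **Distinctness of even-indexed Fibonacci numbers modulo `p`.**
Let `p` be an odd prime and `n > n' ≥ 1` integers with `2(n + n') < z(p)`; then
`F_{2n} ≢ F_{2n'} (mod p)`. In particular the residues `F_{2n} (mod p)` are
pairwise distinct as `n` ranges over positive integers with `4n < z(p)`. -/
theorem stmt_10 (p : ℕ) (hp : p.Prime) (hodd : Odd p) :
    (∀ n n' : ℕ, 1 ≤ n' → n' < n → 2 * (n + n') < orderOfAppearance p →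
      ¬ (Nat.fib (2 * n) ≡ Nat.fib (2 * n') [MOD p])) ∧
    (∀ n m : ℕ, 1 ≤ n → 1 ≤ m →
      4 * n < orderOfAppearance p → 4 * m < orderOfAppearance p →
      Nat.fib (2 * n) ≡ Nat.fib (2 * m) [MOD p] → n = m) :=
  stmt_10_general p hp
end

section
/- Let p be a prime and let A, B be subsets of the finite field 𝔽_p with |A|·|B| > 2p. Then every element of 𝔽_p can be written as a₁·b₁ + a₂·b₂ + … + a₈·b₈ with a₁, …, a₈ ∈ A and b₁, …, b₈ ∈ B; that is, the 8-fold sumset of the product set A·B equals 𝔽_p. -/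
/-!
Split `B` into `B₀ = {b ∈ B | -b ∈ B}` and `B₁ = B \ B₀`; for one of them, `C`, we have
`|A| |C| > q = |F|`. Averaging over `ξ` the number of collisions of `(a, c) ↦ a + ξ c` on `A × C`
(at most `|A||C| (q + |A||C| - 1)` in total, since two distinct pairs collide for at most one `ξ`)
and applying Cauchy–Schwarz yields a `ξ` with `|A + ξC| > q/2` and `|A - ξC| > q/2`, so that
`(A + ξC) + (A + ξC) = F` by pigeonhole. If `ξ = t / s`, then `s (A + ξC) = sA + tC`, and this is a
sum of four products from `A` and `B` as soon as `s` is a sum of two elements of `±C` and `t` one of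
two elements of `±A`. For `B₀` such `s, t` come from a collision `a + ξc = a' + ξc'` (there is one
since `|A||C| > q`): `ξ = (a - a') / (c' + (-c))`. For `B₁` they come from
`0 ∈ (A - ξC) + (A - ξC)`: `ξ = (a + a') / (c + c')`, and `c + c' ≠ 0` is exactly what defines `B₁`.
-/

namespace Finset

theorem exists_add_eq_of_card_lt_two_mul_card {G : Type*} [AddGroup G] [Fintype G]
    [DecidableEq G] {Y : Finset G} (hY : Fintype.card G < 2 * #Y) (c : G) :
    ∃ y₁ ∈ Y, ∃ y₂ ∈ Y, y₁ + y₂ = c := by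
  have hcard : #(Y.image (c - ·)) = #Y := card_image_of_injective _ sub_right_injective
  obtain ⟨y₁, hy₁⟩ := inter_nonempty_of_card_lt_card_add_card (subset_univ Y)
    (subset_univ (Y.image (c - ·))) (by rw [card_univ, hcard]; omega)
  rw [mem_inter, mem_image] at hy₁
  obtain ⟨hy₁, y₂, hy₂, rfl⟩ := hy₁
  exact ⟨_, hy₁, y₂, hy₂, sub_add_cancel c y₂⟩

section Collisions

variable {α β : Type*} [DecidableEq β]

def collisions (S : Finset α) (f : α → β) : Finset (α × α) :=
  {uv ∈ S ×ˢ S | f uv.1 = f uv.2}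

theorem mem_collisions {S : Finset α} {f : α → β} {uv : α × α} :
    uv ∈ S.collisions f ↔ (uv.1 ∈ S ∧ uv.2 ∈ S) ∧ f uv.1 = f uv.2 := by
  rw [collisions, mem_filter, mem_product]

theorem sq_card_le_card_image_mul_card_collisions (S : Finset α) (f : α → β) :
    #S ^ 2 ≤ #(S.image f) * #(S.collisions f) := by
  have hfiber : #(S.collisions f) = ∑ y ∈ S.image f, #{u ∈ S | f u = y} ^ 2 := by
    rw [card_eq_sum_card_fiberwise (f := fun uv => f uv.1) (t := S.image f)]
    · refine sum_congr rfl fun y _ => ?_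
      rw [sq, ← card_product]
      congr 1
      ext ⟨u, v⟩
      simp only [mem_filter, mem_collisions, mem_product]
      constructor
      · rintro ⟨⟨⟨hu, hv⟩, huv⟩, rfl⟩; exact ⟨⟨hu, rfl⟩, hv, huv.symm⟩
      · rintro ⟨⟨hu, rfl⟩, hv, hvy⟩; exact ⟨⟨⟨hu, hv⟩, hvy.symm⟩, rfl⟩
    · exact fun uv huv => mem_image_of_mem f (mem_collisions.1 huv).1.1
  rw [card_eq_sum_card_image f S, hfiber]
  exact sq_sum_le_card_mul_sum_sq

end Collisions

end Finset

open Finset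

namespace Glibichuk

variable {F : Type*} [Field F] [DecidableEq F]

/-- The image of `A ×ˢ C` under `addMul ξ` is `A + ξ • C`. Counting collisions of `addMul ξ` on
`A ×ˢ C`, rather than the additive energy of `A` and `ξ • C`, keeps `ξ = 0` in the average. -/
def addMul (ξ : F) (v : F × F) : F := v.1 + ξ * v.2

theorem card_collisions_addMul_neg (A C : Finset F) (ξ : F) :
    #((A ×ˢ C).collisions (addMul (-ξ))) = #((A ×ˢ C).collisions (addMul ξ)) := by
  refine card_nbij' (fun uv => ((uv.1.1, uv.2.2), (uv.2.1, uv.1.2)))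
    (fun uv => ((uv.1.1, uv.2.2), (uv.2.1, uv.1.2))) ?_ ?_ (fun _ _ => rfl) (fun _ _ => rfl)
  all_goals
    intro uv h
    simp only [mem_coe, mem_collisions, mem_product, addMul] at h ⊢
    exact ⟨⟨⟨h.1.1.1, h.1.2.2⟩, h.1.2.1, h.1.1.2⟩, by linear_combination h.2⟩

variable [Fintype F]

theorem card_filter_addMul_eq_le (u v : F × F) :
    #{ξ : F | addMul ξ u = addMul ξ v} ≤ if u = v then Fintype.card F else 1 := by
  split_ifs with huv
  · exact card_le_univ _
  refine card_le_one.2 fun ξ₁ h₁ ξ₂ h₂ => ?_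
  rw [mem_filter_univ] at h₁ h₂
  simp only [addMul] at h₁ h₂
  have hprod : (ξ₁ - ξ₂) * (u.2 - v.2) = 0 := by linear_combination h₁ - h₂
  rcases mul_eq_zero.1 hprod with h | h
  · exact sub_eq_zero.1 h
  · have h₂' : u.2 = v.2 := sub_eq_zero.1 h
    exact absurd (Prod.ext (by rw [h₂'] at h₁; exact add_right_cancel h₁) h₂') huv

theorem sum_card_collisions_addMul_le (S : Finset (F × F)) :
    ∑ ξ, #(S.collisions (addMul ξ)) ≤ #S * (Fintype.card F + #S - 1) := by
  calc ∑ ξ, #(S.collisions (addMul ξ))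
      = ∑ uv ∈ S ×ˢ S, #{ξ : F | addMul ξ uv.1 = addMul ξ uv.2} := by
        simp only [collisions, card_filter]
        exact sum_comm
    _ ≤ ∑ uv ∈ S ×ˢ S, if uv.1 = uv.2 then Fintype.card F else 1 :=
        sum_le_sum fun uv _ => card_filter_addMul_eq_le uv.1 uv.2
    _ = #S * (Fintype.card F + #S - 1) := by
        rw [sum_product, ← smul_eq_mul, ← sum_const]
        refine sum_congr rfl fun u hu => ?_
        rw [sum_ite, filter_eq, if_pos hu, filter_ne, sum_const, sum_const, card_erase_of_mem hu]
        simp only [card_singleton, smul_eq_mul, one_mul, mul_one]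
        have := card_pos.2 ⟨u, hu⟩
        omega

theorem lt_two_mul_of_sq_le_mul {q K s E : ℕ} (hK : q < K) (hCS : K ^ 2 ≤ s * E)
    (hE : q * E ≤ K * (q + K - 1)) : q < 2 * s := by
  by_contra! hs
  obtain rfl | hq := q.eq_zero_or_pos
  · rw [show s = 0 by omega, zero_mul] at hCS
    exact (pow_pos (by omega : 0 < K) 2).not_ge hCS
  have hqK : q * K ≤ s * (q + K - 1) := by
    refine Nat.le_of_mul_le_mul_left ?_ (by omega : 0 < K)
    calc K * (q * K) = q * K ^ 2 := by ring
      _ ≤ q * (s * E) := Nat.mul_le_mul_left q hCS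
      _ = s * (q * E) := by ring
      _ ≤ s * (K * (q + K - 1)) := Nat.mul_le_mul_left s hE
      _ = K * (s * (q + K - 1)) := by ring
  have : q * (2 * K) ≤ q * (q + K - 1) :=
    calc q * (2 * K) = 2 * (q * K) := by ring
      _ ≤ 2 * (s * (q + K - 1)) := Nat.mul_le_mul_left 2 hqK
      _ = (2 * s) * (q + K - 1) := by ring
      _ ≤ q * (q + K - 1) := Nat.mul_le_mul_right _ hs
  have := Nat.le_of_mul_le_mul_left this hq
  omega

theorem exists_lt_two_mul_card_image_addMul (A C : Finset F)
    (hK : Fintype.card F < #A * #C) :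
    ∃ ξ : F, Fintype.card F < 2 * #((A ×ˢ C).image (addMul ξ)) ∧
      Fintype.card F < 2 * #((A ×ˢ C).image (addMul (-ξ))) := by
  set S := A ×ˢ C
  obtain ⟨ξ, -, hξ⟩ := exists_le_of_sum_le (univ_nonempty (α := F))
    (f := fun ξ => Fintype.card F * #(S.collisions (addMul ξ)))
    (g := fun _ => #S * (Fintype.card F + #S - 1)) (by
      rw [← mul_sum, sum_const, card_univ, smul_eq_mul]
      exact Nat.mul_le_mul_left _ (sum_card_collisions_addMul_le S))
  have hS : Fintype.card F < #S := by rwa [card_product]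
  have key : ∀ η, #(S.collisions (addMul η)) = #(S.collisions (addMul ξ)) →
      Fintype.card F < 2 * #(S.image (addMul η)) := fun η hη =>
    lt_two_mul_of_sq_le_mul hS (hη ▸ sq_card_le_card_image_mul_card_collisions S _) hξ
  exact ⟨ξ, key ξ rfl, key (-ξ) (card_collisions_addMul_neg A C ξ)⟩

theorem exists_mul_add_mul_eq {A C : Finset F} {ξ : F}
    (hY : Fintype.card F < 2 * #((A ×ˢ C).image (addMul ξ))) {s t : F} (hs : s ≠ 0)
    (ht : t = ξ * s) (c : F) :
    ∃ a₁ ∈ A, ∃ c₁ ∈ C, ∃ a₂ ∈ A, ∃ c₂ ∈ C, a₁ * s + t * c₁ + (a₂ * s + t * c₂) = c := by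
  obtain ⟨y₁, hy₁, y₂, hy₂, hy⟩ := exists_add_eq_of_card_lt_two_mul_card hY (c / s)
  simp only [mem_image, mem_product] at hy₁ hy₂
  obtain ⟨⟨a₁, c₁⟩, ⟨ha₁, hc₁⟩, rfl⟩ := hy₁
  obtain ⟨⟨a₂, c₂⟩, ⟨ha₂, hc₂⟩, rfl⟩ := hy₂
  refine ⟨a₁, ha₁, c₁, hc₁, a₂, ha₂, c₂, hc₂, ?_⟩
  rw [eq_div_iff hs] at hy
  simp only [addMul] at hy
  subst ht
  linear_combination hy

theorem exists_sum_eight_of_neg_mem {A B C : Finset F} (hCB : C ⊆ B) (hneg : ∀ b ∈ C, -b ∈ B)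
    (hK : Fintype.card F < #A * #C) (c : F) :
    ∃ a b : Fin 8 → F, (∀ i, a i ∈ A) ∧ (∀ i, b i ∈ B) ∧ ∑ i, a i * b i = c := by
  obtain ⟨ξ, hξ, -⟩ := exists_lt_two_mul_card_image_addMul A C hK
  obtain ⟨u, hu, v, hv, huv, hξuv⟩ := exists_ne_map_eq_of_card_lt_of_maps_to
    (by rwa [card_univ, card_product]) (f := addMul ξ) (fun _ _ => mem_coe.2 (mem_univ _))
  rw [mem_product] at hu hv
  simp only [addMul] at hξuv
  have hs : v.2 - u.2 ≠ 0 := fun h => huv <| by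
    rw [sub_eq_zero] at h
    exact Prod.ext (by rw [h] at hξuv; exact add_right_cancel hξuv) h.symm
  obtain ⟨a₁, ha₁, c₁, hc₁, a₂, ha₂, c₂, hc₂, hc⟩ :=
    exists_mul_add_mul_eq hξ hs (t := u.1 - v.1) (by linear_combination hξuv) c
  refine ⟨![a₁, a₁, u.1, v.1, a₂, a₂, u.1, v.1], ![v.2, -u.2, c₁, -c₁, v.2, -u.2, c₂, -c₂],
    ?_, ?_, ?_⟩
  · intro i; fin_cases i <;> simp [*]
  · intro i; fin_cases i <;> simp [hCB _, hneg _, *]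
  · simp only [Fin.sum_univ_eight, Matrix.cons_val_zero, Matrix.cons_val_one, Matrix.cons_val]
    linear_combination hc

theorem exists_sum_eight_of_add_ne_zero {A B C : Finset F} (hCB : C ⊆ B)
    (hC : ∀ b ∈ C, ∀ b' ∈ C, b + b' ≠ 0) (hK : Fintype.card F < #A * #C) (c : F) :
    ∃ a b : Fin 8 → F, (∀ i, a i ∈ A) ∧ (∀ i, b i ∈ B) ∧ ∑ i, a i * b i = c := by
  obtain ⟨ξ, hξ, hξneg⟩ := exists_lt_two_mul_card_image_addMul A C hK
  obtain ⟨y₁, hy₁, y₂, hy₂, hy⟩ := exists_add_eq_of_card_lt_two_mul_card hξneg 0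
  simp only [mem_image, mem_product] at hy₁ hy₂
  obtain ⟨⟨a₅, b₅⟩, ⟨ha₅, hb₅⟩, rfl⟩ := hy₁
  obtain ⟨⟨a₆, b₆⟩, ⟨ha₆, hb₆⟩, rfl⟩ := hy₂
  simp only [addMul] at hy
  obtain ⟨a₁, ha₁, c₁, hc₁, a₂, ha₂, c₂, hc₂, hc⟩ :=
    exists_mul_add_mul_eq hξ (hC b₅ hb₅ b₆ hb₆) (t := a₅ + a₆) (by linear_combination hy) c
  refine ⟨![a₁, a₁, a₅, a₆, a₂, a₂, a₅, a₆], ![b₅, b₆, c₁, c₁, b₅, b₆, c₂, c₂], ?_, ?_, ?_⟩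
  · intro i; fin_cases i <;> simp [*]
  · intro i; fin_cases i <;> simp [hCB _, *]
  · simp only [Fin.sum_univ_eight, Matrix.cons_val_zero, Matrix.cons_val_one, Matrix.cons_val]
    linear_combination hc

theorem exists_sum_eight_mul_eq {A B : Finset F} (h : 2 * Fintype.card F < #A * #B) (c : F) :
    ∃ a b : Fin 8 → F, (∀ i, a i ∈ A) ∧ (∀ i, b i ∈ B) ∧ ∑ i, a i * b i = c := by
  have hsplit := card_filter_add_card_filter_not (s := B) (fun b => -b ∈ B)
  by_cases hK : Fintype.card F < #A * #{b ∈ B | -b ∈ B}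
  · exact exists_sum_eight_of_neg_mem (filter_subset _ _) (fun b hb => (mem_filter.1 hb).2) hK c
  refine exists_sum_eight_of_add_ne_zero (C := {b ∈ B | -b ∉ B}) (filter_subset _ _)
    (fun b hb b' hb' hbb' => ?_) (by rw [← hsplit, mul_add] at h; omega) c
  rw [mem_filter] at hb hb'
  exact hb.2 (neg_eq_of_add_eq_zero_right hbb' ▸ hb'.1)

end Glibichuk

/-- **Glibichuk's lemma.**
Let `p` be a prime and `A, B ⊆ 𝔽_p` with `|A|·|B| > 2p`. Then every element of
`𝔽_p` is a sum `a₁·b₁ + … + a₈·b₈` with `aᵢ ∈ A`, `bᵢ ∈ B`; i.e. the 8-fold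
sumset of the product set `A·B` is all of `𝔽_p`. -/
theorem stmt_14 (p : ℕ) (hp : p.Prime) (A B : Finset (ZMod p))
    (h : 2 * p < A.card * B.card) :
    ∀ c : ZMod p, ∃ a b : Fin 8 → ZMod p,
      (∀ i, a i ∈ A) ∧ (∀ i, b i ∈ B) ∧ ∑ i, a i * b i = c := by
  have := Fact.mk hp
  exact Glibichuk.exists_sum_eight_mul_eq (by rwa [ZMod.card])
end

section
/- Let N be a positive integer, let f : {1, …, N} → ℤ be strictly increasing, and let γ₁, …, γ_N be complex numbers with |γ_n| = 1 for all n. Let J denote the number of quadruples (n, m, k, ℓ) ∈ {1, …, N}⁴ with f(n) + f(m) = f(k) + f(ℓ). Then ∫₀¹ |∑_{n=1}^{N} γ_n · e^{2πi α f(n)}| dα ≥ (N³ / J)^{1/2}. -/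
/-!
Write `S(α) = ∑ γₙ e(α f(n))`. Orthogonality of the characters `α ↦ e(α m)` on `[0, 1]` gives
`∫ |S|² = ∑ |γₙ|² = N`, since `f` is injective; applied to `S² = ∑_{n,m} γₙ γₘ e(α (f(n) + f(m)))`
it gives `∫ |S|⁴ ≤ J`. Hölder's inequality with exponents `3/2` and `3` for
`|S|² = |S|^{2/3} |S|^{4/3}` yields `(∫ |S|²)³ ≤ (∫ |S|)² ∫ |S|⁴`, that is `N³ ≤ (∫ |S|)² J`.
-/

open Finset Complex MeasureTheory

section Interpolation

variable {α E : Type*} [MeasurableSpace α] {μ : Measure α} [IsFiniteMeasure μ]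
  [NormedAddCommGroup E]

theorem integral_norm_sq_pow_three_le {F : α → E} (hF : MemLp F 4 μ) :
    (∫ x, ‖F x‖ ^ 2 ∂μ) ^ 3 ≤ (∫ x, ‖F x‖ ∂μ) ^ 2 * ∫ x, ‖F x‖ ^ 4 ∂μ := by
  have hconj : Real.HolderConjugate (3 / 2) 3 := ⟨by norm_num, by norm_num, by norm_num⟩
  have h23 : MemLp (fun x => ‖F x‖ ^ ((2:ℝ) / 3)) (ENNReal.ofReal (3 / 2)) μ := by
    have := hF.norm_rpow_div (ENNReal.ofReal (2 / 3))
    rw [ENNReal.toReal_ofReal (by norm_num)] at this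
    refine this.mono_exponent ?_
    rw [← ENNReal.ofReal_ofNat, ← ENNReal.ofReal_div_of_pos (by norm_num)]
    exact ENNReal.ofReal_le_ofReal (by norm_num)
  have h43 : MemLp (fun x => ‖F x‖ ^ ((4:ℝ) / 3)) (ENNReal.ofReal 3) μ := by
    have := hF.norm_rpow_div (ENNReal.ofReal (4 / 3))
    rwa [ENNReal.toReal_ofReal (by norm_num), ← ENNReal.ofReal_ofNat,
      ← ENNReal.ofReal_div_of_pos (by norm_num), show (4:ℝ) / (4 / 3) = 3 by norm_num] at this
  have hHolder := integral_mul_le_Lp_mul_Lq_of_nonneg hconj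
    (ae_of_all _ fun x => by positivity) (ae_of_all _ fun x => by positivity) h23 h43
  simp only [← Real.rpow_add' (norm_nonneg _) (by norm_num : (2:ℝ) / 3 + 4 / 3 ≠ 0),
    ← Real.rpow_mul (norm_nonneg _)] at hHolder
  norm_num at hHolder
  have hL1 : 0 ≤ ∫ x, ‖F x‖ ∂μ := integral_nonneg fun _ => norm_nonneg _
  have hL4 : 0 ≤ ∫ x, ‖F x‖ ^ 4 ∂μ := integral_nonneg fun _ => by positivity
  calc (∫ x, ‖F x‖ ^ 2 ∂μ) ^ 3
      ≤ ((∫ x, ‖F x‖ ∂μ) ^ (2 / 3 : ℝ) * (∫ x, ‖F x‖ ^ 4 ∂μ) ^ (1 / 3 : ℝ)) ^ 3 :=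
        pow_le_pow_left₀ (integral_nonneg fun _ => by positivity) hHolder 3
    _ = (∫ x, ‖F x‖ ∂μ) ^ 2 * ∫ x, ‖F x‖ ^ 4 ∂μ := by
        rw [mul_pow, ← Real.rpow_mul_natCast hL1, ← Real.rpow_mul_natCast hL4]
        norm_num

theorem intervalIntegral_norm_sq_pow_three_le {F : ℝ → E} (hF : Continuous F) {a b : ℝ}
    (hab : a ≤ b) :
    (∫ x in a..b, ‖F x‖ ^ 2) ^ 3 ≤ (∫ x in a..b, ‖F x‖) ^ 2 * ∫ x in a..b, ‖F x‖ ^ 4 := by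
  simp only [intervalIntegral.integral_of_le hab]
  obtain ⟨C, hC⟩ := isCompact_Icc.exists_bound_of_continuousOn hF.continuousOn
  exact integral_norm_sq_pow_three_le <| MemLp.of_bound hF.aestronglyMeasurable C <|
    (ae_restrict_iff' measurableSet_Ioc).2 <|
      ae_of_all _ fun x hx => hC x (Set.Ioc_subset_Icc_self hx)

end Interpolation

section ExpSum

variable {ι κ : Type*}

noncomputable def expSum (A : Finset ι) (c : ι → ℂ) (g : ι → ℤ) (α : ℝ) : ℂ :=
  ∑ i ∈ A, c i * exp (2 * (Real.pi : ℂ) * I * (α : ℂ) * (g i : ℂ))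

theorem continuous_expSum (A : Finset ι) (c : ι → ℂ) (g : ι → ℤ) : Continuous (expSum A c g) :=
  continuous_finsetSum _ fun _ _ => by fun_prop

theorem expSum_mul (A : Finset ι) (B : Finset κ) (c : ι → ℂ) (d : κ → ℂ) (g : ι → ℤ)
    (h : κ → ℤ) (α : ℝ) :
    expSum A c g α * expSum B d h α =
      expSum (A ×ˢ B) (fun p => c p.1 * d p.2) (fun p => g p.1 + h p.2) α := by
  rw [expSum, expSum, expSum, sum_mul_sum, sum_product]
  refine sum_congr rfl fun i _ => sum_congr rfl fun j _ => ?_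
  rw [mul_mul_mul_comm, ← Complex.exp_add]
  push_cast
  ring_nf

theorem conj_expSum (A : Finset ι) (c : ι → ℂ) (g : ι → ℤ) (α : ℝ) :
    starRingEnd ℂ (expSum A c g α) = expSum A (fun i => starRingEnd ℂ (c i)) (-g) α := by
  simp only [expSum, map_sum, map_mul, ← exp_conj, conj_ofReal, conj_I, map_ofNat, map_intCast,
    Pi.neg_apply, Int.cast_neg]
  refine sum_congr rfl fun i _ => ?_
  ring_nf

theorem integral_exp_two_pi_I_mul_int (m : ℤ) :
    ∫ α in (0 : ℝ)..1, exp (2 * (Real.pi : ℂ) * I * (α : ℂ) * (m : ℂ)) =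
      if m = 0 then 1 else 0 := by
  split_ifs with hm
  · simp [hm]
  have hc : 2 * (Real.pi : ℂ) * I * m ≠ 0 := by simp [Real.pi_ne_zero, hm]
  simp_rw [show ∀ α : ℝ, 2 * (Real.pi : ℂ) * I * α * m = 2 * Real.pi * I * m * α from
    fun α => by ring]
  rw [integral_exp_mul_complex hc, ofReal_one, mul_one, ofReal_zero, mul_zero, exp_zero,
    show 2 * (Real.pi : ℂ) * I * m = m * (2 * Real.pi * I) by ring, exp_int_mul_two_pi_mul_I,
    sub_self, zero_div]

theorem integral_expSum (A : Finset ι) (c : ι → ℂ) (g : ι → ℤ) :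
    ∫ α in (0 : ℝ)..1, expSum A c g α = ∑ i ∈ A with g i = 0, c i := by
  unfold expSum
  rw [intervalIntegral.integral_finsetSum fun i _ =>
    (by fun_prop : Continuous _).intervalIntegrable _ _, sum_filter]
  refine sum_congr rfl fun i _ => ?_
  rw [intervalIntegral.integral_const_mul, integral_exp_two_pi_I_mul_int, mul_ite, mul_one,
    mul_zero]

theorem integral_norm_sq_expSum (A : Finset ι) (c : ι → ℂ) (g : ι → ℤ) :
    ((∫ α in (0 : ℝ)..1, ‖expSum A c g α‖ ^ 2 : ℝ) : ℂ) =
      ∑ p ∈ A ×ˢ A with g p.1 = g p.2, c p.1 * starRingEnd ℂ (c p.2) := by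
  simp_rw [← intervalIntegral.integral_ofReal, ofReal_pow, ← mul_conj', conj_expSum,
    expSum_mul, integral_expSum, Pi.neg_apply, ← sub_eq_add_neg, sub_eq_zero]

theorem integral_norm_sq_expSum_of_injOn {A : Finset ι} (c : ι → ℂ) {g : ι → ℤ}
    (hg : Set.InjOn g A) :
    ∫ α in (0 : ℝ)..1, ‖expSum A c g α‖ ^ 2 = ∑ i ∈ A, ‖c i‖ ^ 2 := by
  have hdiag : {p ∈ A ×ˢ A | g p.1 = g p.2} = A.diag := by
    ext ⟨i, j⟩
    simp only [mem_filter, mem_product, mem_diag]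
    exact ⟨fun ⟨⟨hi, hj⟩, h⟩ => ⟨hi, hg hi hj h⟩, by rintro ⟨hi, rfl⟩; exact ⟨⟨hi, hi⟩, rfl⟩⟩
  apply ofReal_injective
  rw [integral_norm_sq_expSum, hdiag, diag, sum_map]
  push_cast
  exact sum_congr rfl fun i _ => mul_conj' (c i)

theorem integral_norm_sq_expSum_le {A : Finset ι} {c : ι → ℂ} (hc : ∀ i ∈ A, ‖c i‖ ≤ 1)
    (g : ι → ℤ) :
    ∫ α in (0 : ℝ)..1, ‖expSum A c g α‖ ^ 2 ≤ #{p ∈ A ×ˢ A | g p.1 = g p.2} := by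
  have h := congrArg norm (integral_norm_sq_expSum A c g)
  rw [norm_real, Real.norm_of_nonneg
    (intervalIntegral.integral_nonneg zero_le_one fun _ _ => by positivity)] at h
  rw [h, card_eq_sum_ones, Nat.cast_sum]
  refine (norm_sum_le _ _).trans (sum_le_sum fun p hp => ?_)
  obtain ⟨⟨hp₁, hp₂⟩, -⟩ := by simpa only [mem_filter, mem_product] using hp
  rw [norm_mul, RCLike.norm_conj, Nat.cast_one]
  exact mul_le_one₀ (hc _ hp₁) (norm_nonneg _) (hc _ hp₂)

def additiveQuadruples (A : Finset ι) (g : ι → ℤ) : Finset (ι × ι × ι × ι) :=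
  {q ∈ A ×ˢ A ×ˢ A ×ˢ A | g q.1 + g q.2.1 = g q.2.2.1 + g q.2.2.2}

theorem card_additiveQuadruples (A : Finset ι) (g : ι → ℤ) :
    #(additiveQuadruples A g) =
      #{q ∈ (A ×ˢ A) ×ˢ (A ×ˢ A) | g q.1.1 + g q.1.2 = g q.2.1 + g q.2.2} :=
  card_equiv (Equiv.prodAssoc ι ι (ι × ι)).symm fun q => by
    simp [additiveQuadruples, and_assoc]

theorem integral_norm_pow_four_expSum_le {A : Finset ι} {c : ι → ℂ} (hc : ∀ i ∈ A, ‖c i‖ ≤ 1)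
    (g : ι → ℤ) :
    ∫ α in (0 : ℝ)..1, ‖expSum A c g α‖ ^ 4 ≤ #(additiveQuadruples A g) := by
  have hsq : ∀ α, ‖expSum A c g α‖ ^ 4 =
      ‖expSum (A ×ˢ A) (fun p => c p.1 * c p.2) (fun p => g p.1 + g p.2) α‖ ^ 2 := fun α => by
    rw [← expSum_mul, norm_mul]
    ring
  simp_rw [hsq, card_additiveQuadruples]
  refine integral_norm_sq_expSum_le (fun p hp => ?_) _
  obtain ⟨hp₁, hp₂⟩ := mem_product.1 hp
  rw [norm_mul]
  exact mul_le_one₀ (hc _ hp₁) (norm_nonneg _) (hc _ hp₂)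

end ExpSum

theorem stmt_16_general (N : ℕ) (f : ℕ → ℤ)
    (hf : StrictMonoOn f (Set.Icc 1 N)) (γ : ℕ → ℂ)
    (hγ : ∀ n ∈ Finset.Icc 1 N, ‖γ n‖ = 1) :
    Real.sqrt ((N : ℝ) ^ 3 /
        (((Finset.Icc 1 N ×ˢ Finset.Icc 1 N ×ˢ Finset.Icc 1 N ×ˢ Finset.Icc 1 N).filter
            (fun q => f q.1 + f q.2.1 = f q.2.2.1 + f q.2.2.2)).card : ℝ))
      ≤ ∫ α in (0 : ℝ)..1,
          ‖∑ n ∈ Finset.Icc 1 N,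
            γ n * Complex.exp (2 * (Real.pi : ℂ) * Complex.I * (α : ℂ) *
              ((f n : ℤ) : ℂ))‖ := by
  change √(N ^ 3 / #(additiveQuadruples (Icc 1 N) f)) ≤
    ∫ α in (0 : ℝ)..1, ‖expSum (Icc 1 N) γ f α‖
  set S := expSum (Icc 1 N) γ f
  have hL2 : ∫ α in (0 : ℝ)..1, ‖S α‖ ^ 2 = N := by
    rw [integral_norm_sq_expSum_of_injOn γ (by simpa using hf.injOn)]
    simp [sum_congr rfl fun n hn => congrArg (· ^ 2) (hγ n hn)]
  have hL4 := integral_norm_pow_four_expSum_le (fun n hn => (hγ n hn).le) f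
  have hL1 : 0 ≤ ∫ α in (0 : ℝ)..1, ‖S α‖ :=
    intervalIntegral.integral_nonneg zero_le_one fun _ _ => norm_nonneg _
  have hcube : (N : ℝ) ^ 3 ≤ (∫ α in (0 : ℝ)..1, ‖S α‖) ^ 2 * #(additiveQuadruples (Icc 1 N) f) :=
    calc (N : ℝ) ^ 3 = (∫ α in (0 : ℝ)..1, ‖S α‖ ^ 2) ^ 3 := by rw [hL2]
      _ ≤ (∫ α in (0 : ℝ)..1, ‖S α‖) ^ 2 * ∫ α in (0 : ℝ)..1, ‖S α‖ ^ 4 :=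
        intervalIntegral_norm_sq_pow_three_le (continuous_expSum _ _ _) zero_le_one
      _ ≤ _ := by gcongr
  exact Real.sqrt_le_iff.2 ⟨hL1, div_le_of_le_mul₀ (by positivity) (by positivity) hcube⟩

/-- **Karatsuba's inequality for the `L¹`-norm of exponential sums.**
Let `f : {1, …, N} → ℤ` be strictly increasing and `γ₁, …, γ_N` unimodular
complex coefficients. If `J` is the number of quadruples
`(n, m, k, ℓ) ∈ {1, …, N}⁴` with `f(n) + f(m) = f(k) + f(ℓ)`, then
`∫₀¹ |∑_{n=1}^{N} γ_n e^{2πi α f(n)}| dα ≥ (N³/J)^{1/2}`. -/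
theorem stmt_16 (N : ℕ) (hN : 0 < N) (f : ℕ → ℤ)
    (hf : StrictMonoOn f (Set.Icc 1 N)) (γ : ℕ → ℂ)
    (hγ : ∀ n ∈ Finset.Icc 1 N, ‖γ n‖ = 1) :
    Real.sqrt ((N : ℝ) ^ 3 /
        (((Finset.Icc 1 N ×ˢ Finset.Icc 1 N ×ˢ Finset.Icc 1 N ×ˢ Finset.Icc 1 N).filter
            (fun q => f q.1 + f q.2.1 = f q.2.2.1 + f q.2.2.2)).card : ℝ))
      ≤ ∫ α in (0 : ℝ)..1,
          ‖∑ n ∈ Finset.Icc 1 N,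
            γ n * Complex.exp (2 * (Real.pi : ℂ) * Complex.I * (α : ℂ) *
              ((f n : ℤ) : ℂ))‖ :=
  stmt_16_general N f hf γ hγ
end
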